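/- arXiv:1710.02981 — 4 statements merged into one kernel-verified Lean document; each statement's English description precedes it below -/
import Mathlib

section
/- Let 0 < α ≤ 1, 1 ≤ p < ∞ and 0 < β < α/p. Let T be the unilateral weighted backward shift operator on ℓ^p(ℕ) defined on the canonical basis by T e_1 = 0 and T e_j = (j/(j−1))^β e_{j−1} for j > 1. Then T is absolutely (C,α)-Cesàro bounded. -/
open Filter
open scoped ENNReal

/-- The Cesàro kernel of order `α`: `k^α(n) = Γ(α+n) / (Γ(α)·Γ(n+1))`. -/
noncomputable def cesKernel (α : ℝ) (n : ℕ) : ℝ :=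
  Real.Gamma (α + n) / (Real.Gamma α * Real.Gamma (n + 1))

/-- A bounded linear operator `T` on a complex Banach space is absolutely `(C,α)`-Cesàro
bounded if there is `C > 0` with
`(1/k^{α+1}(n)) · Σ_{j=0}^n k^α(n-j) ‖T^j x‖ ≤ C ‖x‖` for all `n` and `x`. -/
def AbsCesaroBounded {X : Type*} [NormedAddCommGroup X] [NormedSpace ℂ X]
    (α : ℝ) (T : X →L[ℂ] X) : Prop :=
  ∃ C : ℝ, 0 < C ∧ ∀ (n : ℕ) (x : X),
    (cesKernel (α + 1) n)⁻¹ *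
      ∑ j ∈ Finset.range (n + 1), cesKernel α (n - j) * ‖(T ^ j) x‖ ≤ C * ‖x‖

namespace CesAux

lemma cesKernel_zero (α : ℝ) (hα : 0 < α) : cesKernel α 0 = 1 := by
  have h1 : Real.Gamma α ≠ 0 := (Real.Gamma_pos_of_pos hα).ne'
  simp [cesKernel, Real.Gamma_one, h1]

lemma gamma_nat_pos (n : ℕ) : 0 < Real.Gamma ((n : ℝ) + 1) := by
  rw [Real.Gamma_nat_eq_factorial]
  positivity

lemma cesKernel_succ (α : ℝ) (hα : 0 < α) (n : ℕ) :
    cesKernel α (n + 1) = cesKernel α n * ((α + n) / (n + 1)) := by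
  have hαn : (0:ℝ) < α + n := by positivity
  have hn1 : (0:ℝ) < (n:ℝ) + 1 := by positivity
  have h1 : Real.Gamma α ≠ 0 := (Real.Gamma_pos_of_pos hα).ne'
  have h2 : Real.Gamma ((n:ℝ) + 1) ≠ 0 := (gamma_nat_pos n).ne'
  have e1 : Real.Gamma (α + (n + 1 : ℕ)) = (α + n) * Real.Gamma (α + n) := by
    rw [(by push_cast; ring : α + ((n : ℕ) + 1 : ℕ) = (α + n) + 1)]
    exact Real.Gamma_add_one hαn.ne'
  have e2 : Real.Gamma (((n + 1 : ℕ) : ℝ) + 1) = ((n:ℝ) + 1) * Real.Gamma ((n:ℝ) + 1) := by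
    rw [(by push_cast; ring : ((n + 1 : ℕ) : ℝ) + 1 = ((n:ℝ) + 1) + 1)]
    exact Real.Gamma_add_one hn1.ne'
  rw [cesKernel, cesKernel, e1, e2]
  field_simp

lemma cesKernel_pos (α : ℝ) (hα : 0 < α) (n : ℕ) : 0 < cesKernel α n := by
  induction n with
  | zero => rw [cesKernel_zero α hα]; norm_num
  | succ n ih =>
    rw [cesKernel_succ α hα n]
    have : (0:ℝ) < α + n := by positivity
    have : (0:ℝ) < (n:ℝ) + 1 := by positivity
    positivity

lemma cesKernel_shift (α : ℝ) (hα : 0 < α) (n : ℕ) :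
    cesKernel (α + 1) n = cesKernel α n * ((α + n) / α) := by
  have hαn : (0:ℝ) < α + n := by positivity
  have h1 : Real.Gamma α ≠ 0 := (Real.Gamma_pos_of_pos hα).ne'
  have h2 : Real.Gamma ((n:ℝ) + 1) ≠ 0 := (gamma_nat_pos n).ne'
  have e1 : Real.Gamma (α + 1 + n) = (α + n) * Real.Gamma (α + n) := by
    rw [(by ring : α + 1 + (n:ℝ) = (α + n) + 1)]
    exact Real.Gamma_add_one hαn.ne'
  have e2 : Real.Gamma (α + 1) = α * Real.Gamma α := Real.Gamma_add_one hα.ne'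
  rw [cesKernel, cesKernel, e1, e2]
  field_simp

lemma cesKernel_sum (α : ℝ) (hα : 0 < α) (n : ℕ) :
    ∑ m ∈ Finset.range (n + 1), cesKernel α m = cesKernel (α + 1) n := by
  induction n with
  | zero => simp [cesKernel_zero α hα, cesKernel_zero (α+1) (by positivity)]
  | succ n ih =>
    rw [Finset.sum_range_succ, ih, cesKernel_succ (α+1) (by positivity) n,
      cesKernel_succ α hα n, cesKernel_shift α hα n]
    have hαn : (0:ℝ) < α + n := by positivity
    have hn1 : (0:ℝ) < (n:ℝ) + 1 := by positivity
    field_simp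
    ring




lemma step_upper (α : ℝ) (hα0 : 0 < α) (hα1 : α ≤ 1) (n : ℕ) :
    (α + n) / ((n:ℝ) + 1) ≤ (((n:ℝ) + 2) / ((n:ℝ) + 1)) ^ (α - 1 : ℝ) := by
  have hn1 : (0:ℝ) < (n:ℝ) + 1 := by positivity
  have hn2 : (0:ℝ) < (n:ℝ) + 2 := by positivity
  have hna : (0:ℝ) < (n:ℝ) + 2 - α := by linarith
  have hbpos : (0:ℝ) < ((n:ℝ) + 2) / ((n:ℝ) + 1) := by positivity
  have hb : ((n:ℝ)+2)/((n:ℝ)+1) = 1 + 1/((n:ℝ)+1) := by field_simp; ring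
  have h1 : (((n:ℝ)+2)/((n:ℝ)+1) : ℝ) ^ (1-α:ℝ) ≤ ((n:ℝ)+2-α)/((n:ℝ)+1) := by
    rw [hb]
    have hm1 : (-1:ℝ) ≤ 1/((n:ℝ)+1) := le_trans (by norm_num : (-1:ℝ) ≤ 0) (by positivity)
    have hber := rpow_one_add_le_one_add_mul_self (s := 1/((n:ℝ)+1)) hm1 (p := 1-α) (by linarith) (by linarith)
    calc (1 + 1/((n:ℝ)+1)) ^ (1-α:ℝ) ≤ 1 + (1-α) * (1/((n:ℝ)+1)) := hber
      _ = ((n:ℝ)+2-α)/((n:ℝ)+1) := by field_simp; ring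
  have h2 : ((n:ℝ)+1)/((n:ℝ)+2-α) ≤ (((n:ℝ)+2)/((n:ℝ)+1)) ^ (α-1:ℝ) := by
    rw [show (α - 1 : ℝ) = -(1-α) by ring, Real.rpow_neg hbpos.le]
    calc ((n:ℝ)+1)/((n:ℝ)+2-α) = (((n:ℝ)+2-α)/((n:ℝ)+1))⁻¹ := by rw [inv_div]
      _ ≤ ((((n:ℝ)+2)/((n:ℝ)+1)) ^ (1-α:ℝ))⁻¹ := by
          apply inv_anti₀ (Real.rpow_pos_of_pos hbpos _) h1
  refine le_trans ?_ h2
  rw [div_le_div_iff₀ hn1 hna]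
  nlinarith [sq_nonneg (1 - α)]

lemma step_lower (α : ℝ) (hα0 : 0 < α) (hα1 : α ≤ 1) (n : ℕ) :
    (((n:ℝ) + 2) / ((n:ℝ) + 1)) ^ (α : ℝ) ≤ (α + 1 + n) / ((n:ℝ) + 1) := by
  have hn1 : (0:ℝ) < (n:ℝ) + 1 := by positivity
  have hb : ((n:ℝ)+2)/((n:ℝ)+1) = 1 + 1/((n:ℝ)+1) := by field_simp; ring
  rw [hb]
  calc (1 + 1/((n:ℝ)+1)) ^ (α:ℝ) ≤ 1 + α * (1/((n:ℝ)+1)) :=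
        rpow_one_add_le_one_add_mul_self (le_trans (by norm_num : (-1:ℝ) ≤ 0) (by positivity : (0:ℝ) ≤ 1/((n:ℝ)+1))) hα0.le hα1
    _ = (α + 1 + n) / ((n:ℝ) + 1) := by field_simp; ring



lemma cesKernel_upper (α : ℝ) (hα0 : 0 < α) (hα1 : α ≤ 1) (n : ℕ) :
    cesKernel α n ≤ ((n:ℝ) + 1) ^ (α - 1 : ℝ) := by
  induction n with
  | zero => simp [cesKernel_zero α hα0]
  | succ n ih =>
    have hn1 : (0:ℝ) < (n:ℝ) + 1 := by positivity
    have hn2 : (0:ℝ) < (n:ℝ) + 2 := by positivity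
    have hfrac : (0:ℝ) ≤ (α + n) / ((n:ℝ) + 1) := by positivity
    rw [cesKernel_succ α hα0 n]
    calc cesKernel α n * ((α + n) / ((n:ℝ) + 1))
        ≤ ((n:ℝ) + 1) ^ (α - 1 : ℝ) * ((((n:ℝ) + 2) / ((n:ℝ) + 1)) ^ (α - 1 : ℝ)) := by
          apply mul_le_mul ih (step_upper α hα0 hα1 n) hfrac (by positivity)
      _ = ((n:ℝ) + 2) ^ (α - 1 : ℝ) := by
          rw [Real.div_rpow hn2.le hn1.le]
          field_simp
      _ = (((n+1:ℕ):ℝ) + 1) ^ (α - 1 : ℝ) := by push_cast; ring_nf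
  
lemma cesKernel_lower (α : ℝ) (hα0 : 0 < α) (hα1 : α ≤ 1) (n : ℕ) :
    ((n:ℝ) + 1) ^ (α : ℝ) ≤ cesKernel (α + 1) n := by
  induction n with
  | zero => simp [cesKernel_zero (α+1) (by positivity)]
  | succ n ih =>
    have hn1 : (0:ℝ) < (n:ℝ) + 1 := by positivity
    have hn2 : (0:ℝ) < (n:ℝ) + 2 := by positivity
    rw [cesKernel_succ (α+1) (by positivity) n]
    have h1 : (((n+1:ℕ):ℝ) + 1) ^ (α:ℝ) = ((n:ℝ)+1) ^ (α:ℝ) * ((((n:ℝ)+2)/((n:ℝ)+1)) ^ (α:ℝ)) := by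
      rw [Real.div_rpow hn2.le hn1.le]
      rw [mul_div_assoc']
      rw [mul_comm]
      rw [mul_div_assoc]
      rw [div_self (by positivity : (((n:ℝ)+1) ^ (α:ℝ)) ≠ 0), mul_one]
      push_cast; ring_nf
    rw [h1]
    apply mul_le_mul ih ?_ (by positivity) (le_trans (by positivity) ih)
    calc (((n:ℝ)+2)/((n:ℝ)+1)) ^ (α:ℝ) ≤ (α + 1 + n) / ((n:ℝ)+1) := step_lower α hα0 hα1 n
      _ = (α + 1 + (n:ℕ)) / ((n:ℝ) + 1) := by norm_num

lemma pow_sum_le (s : ℝ) (hs0 : 0 < s) (hs1 : s ≤ 1) (M : ℕ) :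
    ∑ m ∈ Finset.range (M + 1), ((m:ℝ) + 1) ^ (s - 1 : ℝ) ≤ ((M:ℝ) + 1) ^ (s:ℝ) / s := by
  induction M with
  | zero =>
    rw [Finset.sum_range_one]
    norm_num
    exact (one_le_inv₀ hs0).2 hs1
  | succ M ih =>
    have hM1 : (0:ℝ) < (M:ℝ) + 1 := by positivity
    have hM2 : (0:ℝ) < (M:ℝ) + 2 := by positivity
    rw [Finset.sum_range_succ]
    have key : ((M:ℝ) + 1) ^ (s:ℝ) + s * (((M+1:ℕ):ℝ) + 1) ^ (s - 1 : ℝ) ≤ (((M+1:ℕ):ℝ) + 1) ^ (s:ℝ) := by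
      push_cast
      have e2 : ((M:ℝ) + 1 + 1) = (M:ℝ) + 2 := by ring
      rw [e2]
      have hb : ((M:ℝ)+1)/((M:ℝ)+2) = 1 + (-1/((M:ℝ)+2)) := by field_simp; ring
      have hber : (((M:ℝ)+1)/((M:ℝ)+2)) ^ (s:ℝ) ≤ 1 - s/((M:ℝ)+2) := by
        rw [hb]
        calc (1 + (-1/((M:ℝ)+2))) ^ (s:ℝ) ≤ 1 + s * (-1/((M:ℝ)+2)) :=
              rpow_one_add_le_one_add_mul_self (by
                have h : 1/((M:ℝ)+2) ≤ 1 := by rw [div_le_one hM2]; linarith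
                rw [neg_div]; linarith) hs0.le hs1
          _ = 1 - s/((M:ℝ)+2) := by ring
      have hsplit : ((M:ℝ) + 1) ^ (s:ℝ) ≤ (1 - s/((M:ℝ)+2)) * ((M:ℝ)+2) ^ (s:ℝ) := by
        calc ((M:ℝ) + 1) ^ (s:ℝ) = ((((M:ℝ)+1)/((M:ℝ)+2)) * ((M:ℝ)+2)) ^ (s:ℝ) := by
              rw [div_mul_cancel₀ _ hM2.ne']
          _ = (((M:ℝ)+1)/((M:ℝ)+2)) ^ (s:ℝ) * ((M:ℝ)+2) ^ (s:ℝ) :=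
              Real.mul_rpow (by positivity) hM2.le
          _ ≤ (1 - s/((M:ℝ)+2)) * ((M:ℝ)+2) ^ (s:ℝ) := by
              apply mul_le_mul_of_nonneg_right hber (by positivity)
      have hpow : ((M:ℝ)+2) ^ (s - 1 : ℝ) = ((M:ℝ)+2) ^ (s:ℝ) / ((M:ℝ)+2) := by
        rw [Real.rpow_sub hM2, Real.rpow_one]
      rw [hpow]
      have : (1 - s/((M:ℝ)+2)) * ((M:ℝ)+2) ^ (s:ℝ)
          = ((M:ℝ)+2) ^ (s:ℝ) - s * (((M:ℝ)+2) ^ (s:ℝ) / ((M:ℝ)+2)) := by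
        field_simp
      linarith [hsplit, this.symm.le]
    calc (∑ m ∈ Finset.range (M + 1), ((m:ℝ) + 1) ^ (s - 1 : ℝ)) + (((M+1:ℕ):ℝ) + 1) ^ (s - 1 : ℝ)
        ≤ ((M:ℝ) + 1) ^ (s:ℝ) / s + (((M+1:ℕ):ℝ) + 1) ^ (s - 1 : ℝ) := by linarith
      _ ≤ (((M+1:ℕ):ℝ) + 1) ^ (s:ℝ) / s := by
          rw [div_add' _ _ _ hs0.ne', div_le_div_iff₀ hs0 hs0]
          nlinarith [key]


lemma key_sum (α q : ℝ) (hα0 : 0 < α) (hα1 : α ≤ 1) (hq0 : 0 < q) (hqα : q < α) (n k : ℕ) :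
    ∑ j ∈ Finset.range (n+1), cesKernel α (n - j) *
      (if j ≤ k then ((((k:ℕ):ℝ)+1)/(((k - j : ℕ):ℝ)+1)) ^ (q:ℝ) else 0)
    ≤ (α - q)⁻¹ * cesKernel (α+1) n := by
  set M : ℕ := min n k with hM
  have hMn : M ≤ n := min_le_left _ _
  have hMk : M ≤ k := min_le_right _ _
  have hs0 : (0:ℝ) < α - q := by linarith
  have hs1 : α - q ≤ 1 := by linarith
  -- restrict the sum to range (M+1)
  have hrestrict : ∑ j ∈ Finset.range (n+1), cesKernel α (n - j) *
      (if j ≤ k then ((((k:ℕ):ℝ)+1)/(((k - j : ℕ):ℝ)+1)) ^ (q:ℝ) else 0)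
      = ∑ j ∈ Finset.range (M+1), cesKernel α (n - j) *
        (if j ≤ k then ((((k:ℕ):ℝ)+1)/(((k - j : ℕ):ℝ)+1)) ^ (q:ℝ) else 0) := by
    symm
    apply Finset.sum_subset
    · exact Finset.range_subset_range.2 (by omega)
    · intro j hj hj'
      simp only [Finset.mem_range] at hj hj'
      have hjk : ¬ (j ≤ k) := by omega
      rw [if_neg hjk, mul_zero]
  rw [hrestrict]
  have hterm : ∀ j ∈ Finset.range (M+1), cesKernel α (n - j) *
      (if j ≤ k then ((((k:ℕ):ℝ)+1)/(((k - j : ℕ):ℝ)+1)) ^ (q:ℝ) else 0)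
      ≤ ((M:ℝ)+1) ^ (q:ℝ) * (((M - j : ℕ):ℝ)+1) ^ (α - q - 1 : ℝ) := by
    intro j hj
    simp only [Finset.mem_range] at hj
    have hjM : j ≤ M := by omega
    have hjk : j ≤ k := le_trans hjM hMk
    rw [if_pos hjk]
    have hMj1 : (0:ℝ) < ((M - j : ℕ):ℝ) + 1 := by positivity
    have hkj1 : (0:ℝ) < ((k - j : ℕ):ℝ) + 1 := by positivity
    have h1 : cesKernel α (n - j) ≤ (((n - j : ℕ):ℝ)+1) ^ (α - 1 : ℝ) :=
      cesKernel_upper α hα0 hα1 (n - j)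
    have h2 : (((n - j : ℕ):ℝ)+1) ^ (α - 1 : ℝ) ≤ (((M - j : ℕ):ℝ)+1) ^ (α - 1 : ℝ) := by
      apply Real.rpow_le_rpow_of_nonpos hMj1 ?_ (by linarith)
      have : (M - j : ℕ) ≤ (n - j : ℕ) := by omega
      exact_mod_cast (by exact_mod_cast Nat.add_le_add_right this 1 : ((M-j:ℕ)+1 : ℕ) ≤ (n-j:ℕ)+1)
    have h3 : ((((k:ℕ):ℝ)+1)/(((k - j : ℕ):ℝ)+1)) ^ (q:ℝ)
        ≤ ((((M:ℕ):ℝ)+1)/(((M - j : ℕ):ℝ)+1)) ^ (q:ℝ) := by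
      apply Real.rpow_le_rpow (by positivity) ?_ hq0.le
      rw [div_le_div_iff₀ hkj1 hMj1]
      have ekj : ((k - j : ℕ):ℝ) = (k:ℝ) - (j:ℝ) := by
        rw [Nat.cast_sub hjk]
      have eMj : ((M - j : ℕ):ℝ) = (M:ℝ) - (j:ℝ) := by
        rw [Nat.cast_sub hjM]
      rw [ekj, eMj]
      have hMk' : (M:ℝ) ≤ (k:ℝ) := by exact_mod_cast hMk
      have hj0 : (0:ℝ) ≤ (j:ℝ) := by positivity
      nlinarith [mul_nonneg hj0 (sub_nonneg.2 hMk')]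
    calc cesKernel α (n - j) * ((((k:ℕ):ℝ)+1)/(((k - j : ℕ):ℝ)+1)) ^ (q:ℝ)
        ≤ ((((M - j : ℕ):ℝ)+1) ^ (α - 1 : ℝ)) * (((((M:ℕ):ℝ)+1)/(((M - j : ℕ):ℝ)+1)) ^ (q:ℝ)) := by
          apply mul_le_mul (le_trans h1 h2) h3 (by positivity)
            (by positivity)
      _ = ((M:ℝ)+1) ^ (q:ℝ) * (((M - j : ℕ):ℝ)+1) ^ (α - q - 1 : ℝ) := by
          rw [Real.div_rpow (by positivity) hMj1.le]
          rw [div_eq_mul_inv, ← Real.rpow_neg hMj1.le]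
          rw [show (α - q - 1 : ℝ) = (α-1) + (-q) by ring, Real.rpow_add hMj1]
          ring
  calc ∑ j ∈ Finset.range (M+1), cesKernel α (n - j) *
        (if j ≤ k then ((((k:ℕ):ℝ)+1)/(((k - j : ℕ):ℝ)+1)) ^ (q:ℝ) else 0)
      ≤ ∑ j ∈ Finset.range (M+1), ((M:ℝ)+1) ^ (q:ℝ) * (((M - j : ℕ):ℝ)+1) ^ (α - q - 1 : ℝ) :=
        Finset.sum_le_sum hterm
    _ = ((M:ℝ)+1) ^ (q:ℝ) * ∑ j ∈ Finset.range (M+1), (((M - j : ℕ):ℝ)+1) ^ (α - q - 1 : ℝ) := by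
        rw [Finset.mul_sum]
    _ = ((M:ℝ)+1) ^ (q:ℝ) * ∑ m ∈ Finset.range (M+1), (((m : ℕ):ℝ)+1) ^ (α - q - 1 : ℝ) := by
        congr 1
        have := Finset.sum_range_reflect (fun m => (((m : ℕ):ℝ)+1) ^ (α - q - 1 : ℝ)) (M+1)
        rw [← this]
        apply Finset.sum_congr rfl
        intro j hj
        simp only [Finset.mem_range] at hj
        have hjj : M + 1 - 1 - j = M - j := by omega
        rw [hjj]
    _ ≤ ((M:ℝ)+1) ^ (q:ℝ) * (((M:ℝ) + 1) ^ (α - q : ℝ) / (α - q)) := by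
        apply mul_le_mul_of_nonneg_left ?_ (by positivity)
        exact pow_sum_le (α - q) hs0 hs1 M
    _ = ((M:ℝ)+1) ^ (α:ℝ) / (α - q) := by
        rw [mul_div_assoc', ← Real.rpow_add (by positivity : (0:ℝ) < (M:ℝ)+1)]
        ring_nf
    _ ≤ ((n:ℝ)+1) ^ (α:ℝ) / (α - q) := by
        have hMn' : ((M:ℝ)+1) ≤ (n:ℝ)+1 := by exact_mod_cast Nat.add_le_add_right hMn 1
        gcongr
    _ ≤ (α - q)⁻¹ * cesKernel (α+1) n := by
        rw [inv_mul_eq_div, div_le_div_iff₀ hs0 hs0]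
        have := cesKernel_lower α hα0 hα1 n
        nlinarith [cesKernel_pos (α+1) (by positivity) n, hs0]


section Op

variable (p : ℝ≥0∞) [Fact (1 ≤ p)] (β : ℝ)
  (T : lp (fun _ : ℕ => ℂ) p →L[ℂ] lp (fun _ : ℕ => ℂ) p)

/-- weight of `T^j` on basis vector `k` (for `j ≤ k`). -/
noncomputable def wgt (β : ℝ) (j k : ℕ) : ℝ := (((k:ℝ)+1)/((k:ℝ)-(j:ℝ)+1)) ^ β

lemma wgt_nonneg (β : ℝ) (j k : ℕ) (hjk : j ≤ k) : 0 ≤ wgt β j k := by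
  have h : (j:ℝ) ≤ (k:ℝ) := by exact_mod_cast hjk
  have hd : (0:ℝ) < (k:ℝ) - (j:ℝ) + 1 := by linarith
  exact Real.rpow_nonneg (by positivity) β

lemma pow_single (hTj : ∀ j : ℕ, 1 ≤ j →
      T (lp.single p j 1)
        = (((((j : ℝ) + 1) / (j : ℝ)) ^ β : ℝ) : ℂ) • lp.single p (j - 1) 1) :
    ∀ j k : ℕ, j ≤ k →
      (T ^ j) (lp.single p k 1) = ((wgt β j k : ℝ) : ℂ) • lp.single p (k - j) 1 := by
  intro j
  induction j with
  | zero =>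
    intro k _
    have h1 : wgt β 0 k = 1 := by
      rw [wgt]
      norm_num
      rw [div_self (by positivity : ((k:ℝ)+1) ≠ 0), Real.one_rpow]
    rw [pow_zero, h1, ContinuousLinearMap.one_apply]
    norm_num
  | succ j ih =>
    intro k hjk
    have hjk' : j ≤ k := by omega
    have hjlt : j < k := by omega
    have hkj1 : 1 ≤ k - j := by omega
    have hkjR : (0:ℝ) < (k:ℝ) - (j:ℝ) := by
      have : (j:ℝ) < (k:ℝ) := by exact_mod_cast hjlt
      linarith
    rw [pow_succ', ContinuousLinearMap.mul_apply, ih k hjk', map_smul, hTj (k - j) hkj1]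
    rw [smul_smul]
    have hidx : k - j - 1 = k - (j + 1) := by omega
    rw [hidx]
    congr 1
    have hcast : ((k - j : ℕ) : ℝ) = (k:ℝ) - (j:ℝ) := by
      rw [Nat.cast_sub hjk']
    rw [hcast]
    rw [← Complex.ofReal_mul]
    congr 1
    rw [wgt, wgt, ← Real.mul_rpow (by positivity) (by positivity)]
    congr 1
    have hne1 : ((k:ℝ) - (j:ℝ) + 1) ≠ 0 := by intro h; linarith
    have hne2 : ((k:ℝ) - (j:ℝ)) ≠ 0 := hkjR.ne'
    push_cast
    rw [show (k:ℝ) - ((j:ℝ)+1) + 1 = (k:ℝ) - (j:ℝ) by ring]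
    field_simp

lemma pow_single_zero (hT0 : T (lp.single p 0 1) = 0)
    (hTj : ∀ j : ℕ, 1 ≤ j →
      T (lp.single p j 1)
        = (((((j : ℝ) + 1) / (j : ℝ)) ^ β : ℝ) : ℂ) • lp.single p (j - 1) 1) :
    ∀ j k : ℕ, k < j → (T ^ j) (lp.single p k 1) = 0 := by
  have hbase : ∀ k : ℕ, (T ^ (k + 1)) (lp.single p k 1) = 0 := by
    intro k
    rw [pow_succ', ContinuousLinearMap.mul_apply,
      pow_single p β T hTj k k le_rfl, map_smul]
    rw [Nat.sub_self, hT0, smul_zero]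
  intro j k hkj
  have hj : j = (j - (k + 1)) + (k + 1) := by omega
  rw [hj, pow_add, ContinuousLinearMap.mul_apply, hbase k, map_zero]


lemma evalCLM_exists (i : ℕ) : ∃ φ : lp (fun _ : ℕ => ℂ) p →L[ℂ] ℂ,
    ∀ f : lp (fun _ : ℕ => ℂ) p, φ f = f i := by
  have hp0 : p ≠ 0 := by
    have : (1:ℝ≥0∞) ≤ p := Fact.out
    intro h; rw [h] at this; simp at this
  refine ⟨LinearMap.mkContinuous
    { toFun := fun f => f i
      map_add' := fun f g => congrFun (lp.coeFn_add f g) i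
      map_smul' := fun c f => congrFun (lp.coeFn_smul c f) i } 1
    (fun f => by simpa using lp.norm_apply_le_norm hp0 f i), fun f => rfl⟩

lemma pow_apply_coord (hp : p ≠ ⊤)
    (hT0 : T (lp.single p 0 1) = 0)
    (hTj : ∀ j : ℕ, 1 ≤ j →
      T (lp.single p j 1)
        = (((((j : ℝ) + 1) / (j : ℝ)) ^ β : ℝ) : ℂ) • lp.single p (j - 1) 1)
    (j i : ℕ) (x : lp (fun _ : ℕ => ℂ) p) :
    ((T ^ j) x) i = ((wgt β j (i+j) : ℝ) : ℂ) * x (i+j) := by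
  obtain ⟨φ, hφ⟩ := evalCLM_exists p i
  have hx : HasSum (fun k => lp.single p k (x k)) x := lp.hasSum_single hp x
  have h1 : HasSum (fun k => (T ^ j) (lp.single p k (x k))) ((T ^ j) x) :=
    (T ^ j).hasSum hx
  have h2 : HasSum (fun k => φ ((T ^ j) (lp.single p k (x k)))) (φ ((T ^ j) x)) :=
    φ.hasSum h1
  have hsing : ∀ k : ℕ, lp.single (E := fun _ : ℕ => ℂ) p k (x k)
      = x k • lp.single (E := fun _ : ℕ => ℂ) p k (1:ℂ) := by
    intro k
    refine lp.ext (funext fun m => ?_)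
    have hc := lp.coeFn_smul (x k) (lp.single (E := fun _ : ℕ => ℂ) p k (1:ℂ))
    by_cases hm : m = k
    · subst hm
      rw [lp.single_apply_self, hc]
      simp [lp.single_apply_self]
    · rw [lp.single_apply_ne p k _ hm, hc]
      simp [lp.single_apply_ne p k _ hm, Pi.single_apply, hm]
  have hzero : ∀ k, k ≠ i + j → φ ((T ^ j) (lp.single p k (x k))) = 0 := by
    intro k hk
    rw [hsing k, map_smul, map_smul]
    rcases lt_or_ge k j with hkj | hkj
    · rw [pow_single_zero p β T hT0 hTj j k hkj, map_zero, smul_zero]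
    · rw [pow_single p β T hTj j k hkj, map_smul, hφ]
      rw [lp.single_apply_ne p (k - j) 1 (by omega : i ≠ k - j)]
      simp
  have h3 : HasSum (fun k => φ ((T ^ j) (lp.single p k (x k))))
      (φ ((T ^ j) (lp.single p (i+j) (x (i+j))))) :=
    hasSum_single (i+j) hzero
  have h4 : φ ((T ^ j) x) = φ ((T ^ j) (lp.single p (i+j) (x (i+j)))) :=
    h2.unique h3
  rw [hφ] at h4
  rw [h4, hsing (i+j), map_smul, map_smul,
    pow_single p β T hTj j (i+j) (by omega), map_smul, hφ]
  have hidx : i + j - j = i := by omega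
  rw [hidx, lp.single_apply_self]
  simp [mul_comm]

lemma pow_norm_rpow (hp : p ≠ ⊤)
    (hT0 : T (lp.single p 0 1) = 0)
    (hTj : ∀ j : ℕ, 1 ≤ j →
      T (lp.single p j 1)
        = (((((j : ℝ) + 1) / (j : ℝ)) ^ β : ℝ) : ℂ) • lp.single p (j - 1) 1)
    (j : ℕ) (x : lp (fun _ : ℕ => ℂ) p) :
    ‖(T ^ j) x‖ ^ p.toReal
      = ∑' k : ℕ, (if j ≤ k then ((((k:ℕ):ℝ)+1)/(((k - j : ℕ):ℝ)+1)) ^ (β * p.toReal) else 0)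
          * ‖x k‖ ^ p.toReal := by
  have hp0 : p ≠ 0 := by
    have : (1:ℝ≥0∞) ≤ p := Fact.out
    intro h; rw [h] at this; simp at this
  have hpr : 0 < p.toReal := ENNReal.toReal_pos hp0 hp
  rw [lp.norm_rpow_eq_tsum hpr]
  set F : ℕ → ℝ := fun k =>
    (if j ≤ k then ((((k:ℕ):ℝ)+1)/(((k - j : ℕ):ℝ)+1)) ^ (β * p.toReal) else 0)
      * ‖x k‖ ^ p.toReal with hF
  have hinj : Function.Injective (fun i : ℕ => i + j) := fun a b h => by
    simp only [] at h; omega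
  have hsupp : Function.support F ⊆ Set.range (fun i : ℕ => i + j) := by
    intro k hk
    rcases le_or_gt j k with h | h
    · exact ⟨k - j, show k - j + j = k by omega⟩
    · exfalso; apply hk; rw [hF]; simp only [if_neg (by omega : ¬ j ≤ k), zero_mul]
  rw [← Function.Injective.tsum_eq hinj hsupp]
  apply tsum_congr
  intro i
  have hji : j ≤ i + j := by omega
  have hc1 : ((i + j - j : ℕ):ℝ) = (i:ℝ) := by
    congr 1; omega
  have hbase_pos : (0:ℝ) ≤ (((i+j:ℕ):ℝ)+1)/(((i:ℕ):ℝ)+1) := by positivity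
  have hwgt : wgt β j (i+j) = ((((i+j:ℕ):ℝ)+1)/(((i:ℕ):ℝ)+1)) ^ β := by
    rw [wgt]
    congr 2
    push_cast
    ring
  rw [pow_apply_coord p β T hp hT0 hTj j i x]
  simp only [hF, if_pos hji, hc1]
  rw [norm_mul, Complex.norm_real, Real.norm_eq_abs,
    abs_of_nonneg (wgt_nonneg β j (i+j) hji)]
  rw [Real.mul_rpow (wgt_nonneg β j (i+j) hji) (norm_nonneg _)]
  congr 1
  rw [hwgt, ← Real.rpow_mul hbase_pos]


lemma summable_cfun (hp : p ≠ ⊤) (q : ℝ) (hq : 0 ≤ q) (j : ℕ) (x : lp (fun _ : ℕ => ℂ) p) :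
    Summable (fun k : ℕ =>
      (if j ≤ k then ((((k:ℕ):ℝ)+1)/(((k - j : ℕ):ℝ)+1)) ^ q else 0) * ‖x k‖ ^ p.toReal) := by
  have hp0 : p ≠ 0 := by
    have : (1:ℝ≥0∞) ≤ p := Fact.out
    intro h; rw [h] at this; simp at this
  have hpr : 0 < p.toReal := ENNReal.toReal_pos hp0 hp
  have hxsum : Summable (fun k : ℕ => ‖x k‖ ^ p.toReal) :=
    (memℓp_gen_iff hpr).1 (lp.memℓp x)
  apply Summable.of_nonneg_of_le ?_ ?_ (hxsum.mul_left (((j:ℝ)+1) ^ q))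
  · intro k
    apply mul_nonneg ?_ (Real.rpow_nonneg (norm_nonneg _) _)
    split
    · exact Real.rpow_nonneg (by positivity) _
    · exact le_rfl
  · intro k
    apply mul_le_mul_of_nonneg_right ?_ (Real.rpow_nonneg (norm_nonneg _) _)
    split
    · rename_i hjk
      apply Real.rpow_le_rpow (by positivity) ?_ hq
      rw [div_le_iff₀ (by positivity : (0:ℝ) < ((k - j : ℕ):ℝ)+1)]
      have hck : (k:ℝ) = ((k - j : ℕ):ℝ) + (j:ℝ) := by
        rw [← Nat.cast_add]; congr 1; omega
      rw [hck]
      have h0 : (0:ℝ) ≤ ((k - j : ℕ):ℝ) := by positivity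
      have h1 : (0:ℝ) ≤ (j:ℝ) := by positivity
      nlinarith
    · positivity

end Op

end CesAux

/-- Let `0 < α ≤ 1`, `1 ≤ p < ∞` and `0 < β < α/p`. The unilateral weighted backward shift
`T` on `ℓ^p(ℕ)` (with basis `e j = lp.single p j 1`, `j = 0,1,2,...` corresponding to the
canonical basis `e_1, e_2, ...`), given by `T e_1 = 0` and `T e_j = (j/(j-1))^β e_{j-1}`
for `j > 1`, is absolutely `(C,α)`-Cesàro bounded. -/
theorem stmt0 (p : ℝ≥0∞) [Fact (1 ≤ p)] (hp : p ≠ ⊤) (α β : ℝ)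
    (hα0 : 0 < α) (hα1 : α ≤ 1) (hβ0 : 0 < β) (hβ : β < α / p.toReal)
    (T : lp (fun _ : ℕ => ℂ) p →L[ℂ] lp (fun _ : ℕ => ℂ) p)
    (hT0 : T (lp.single p 0 1) = 0)
    (hTj : ∀ j : ℕ, 1 ≤ j →
      T (lp.single p j 1)
        = (((((j : ℝ) + 1) / (j : ℝ)) ^ β : ℝ) : ℂ) • lp.single p (j - 1) 1) :
    AbsCesaroBounded α T := by
  classical
  have hp0 : p ≠ 0 := by
    have : (1:ℝ≥0∞) ≤ p := Fact.out
    intro h; rw [h] at this; simp at this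
  set pr : ℝ := p.toReal with hprdef
  have hpr1 : 1 ≤ pr := by
    have := ENNReal.toReal_mono hp (Fact.out : (1:ℝ≥0∞) ≤ p)
    simpa using this
  have hpr0 : 0 < pr := lt_of_lt_of_le one_pos hpr1
  set q : ℝ := β * pr with hqdef
  have hq0 : 0 < q := mul_pos hβ0 hpr0
  have hqα : q < α := by
    rw [lt_div_iff₀ hpr0] at hβ
    exact hβ
  have hs0 : 0 < α - q := sub_pos.2 hqα
  refine ⟨((α - q)⁻¹) ^ (pr⁻¹ : ℝ), Real.rpow_pos_of_pos (inv_pos.2 hs0) _, ?_⟩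
  set C : ℝ := ((α - q)⁻¹) ^ (pr⁻¹ : ℝ) with hCdef
  intro n x
  set K : ℝ := cesKernel (α+1) n with hK
  have hKpos : 0 < K := CesAux.cesKernel_pos (α+1) (by positivity) n
  have ha : ∀ j : ℕ, 0 ≤ cesKernel α (n - j) := fun j => (CesAux.cesKernel_pos α hα0 _).le
  have hxsum : Summable (fun k : ℕ => ‖x k‖ ^ pr) :=
    (memℓp_gen_iff hpr0).1 (lp.memℓp x)
  have hxnorm : ∑' k : ℕ, ‖x k‖ ^ pr = ‖x‖ ^ pr := (lp.norm_rpow_eq_tsum hpr0 x).symm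
  -- the coefficient function
  set c : ℕ → ℕ → ℝ := fun j k =>
    if j ≤ k then ((((k:ℕ):ℝ)+1)/(((k - j : ℕ):ℝ)+1)) ^ q else 0 with hcdef
  have hcsum : ∀ j : ℕ, Summable (fun k : ℕ => c j k * ‖x k‖ ^ pr) := fun j =>
    CesAux.summable_cfun p hp q hq0.le j x
  have hbpow : ∀ j : ℕ, ‖(T ^ j) x‖ ^ pr = ∑' k : ℕ, c j k * ‖x k‖ ^ pr := fun j =>
    CesAux.pow_norm_rpow p β T hp hT0 hTj j x
  -- Hölder
  have hH := Real.inner_le_weight_mul_Lp_of_nonneg (Finset.range (n+1)) hpr1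
      (fun j => cesKernel α (n - j)) (fun j => ‖(T ^ j) x‖) ha (fun j => norm_nonneg _)
  have hsumw : ∑ j ∈ Finset.range (n+1), cesKernel α (n - j) = K := by
    calc ∑ j ∈ Finset.range (n+1), cesKernel α (n - j)
        = ∑ j ∈ Finset.range (n+1), cesKernel α (n + 1 - 1 - j) := by
          refine Finset.sum_congr rfl (fun j hj => ?_)
          congr 1
      _ = ∑ m ∈ Finset.range (n+1), cesKernel α m :=
          Finset.sum_range_reflect (fun m => cesKernel α m) (n+1)
      _ = K := CesAux.cesKernel_sum α hα0 n
  have hinner : ∑ j ∈ Finset.range (n+1), cesKernel α (n - j) * ‖(T ^ j) x‖ ^ pr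
      ≤ (α - q)⁻¹ * K * ‖x‖ ^ pr := by
    calc ∑ j ∈ Finset.range (n+1), cesKernel α (n - j) * ‖(T ^ j) x‖ ^ pr
        = ∑ j ∈ Finset.range (n+1), ∑' k : ℕ, cesKernel α (n - j) * (c j k * ‖x k‖ ^ pr) := by
          refine Finset.sum_congr rfl (fun j hj => ?_)
          rw [hbpow j, ← tsum_mul_left]
      _ = ∑' k : ℕ, ∑ j ∈ Finset.range (n+1), cesKernel α (n - j) * (c j k * ‖x k‖ ^ pr) :=
          (Summable.tsum_finsetSum (fun j _ => (hcsum j).mul_left _)).symm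
      _ ≤ ∑' k : ℕ, ((α - q)⁻¹ * K) * ‖x k‖ ^ pr := by
          apply Summable.tsum_le_tsum ?_ (summable_sum (fun j _ => (hcsum j).mul_left _))
            (hxsum.mul_left _)
          intro k
          calc ∑ j ∈ Finset.range (n+1), cesKernel α (n - j) * (c j k * ‖x k‖ ^ pr)
              = (∑ j ∈ Finset.range (n+1), cesKernel α (n - j) * c j k) * ‖x k‖ ^ pr := by
                rw [Finset.sum_mul]
                exact Finset.sum_congr rfl (fun j hj => by ring)
            _ ≤ ((α - q)⁻¹ * K) * ‖x k‖ ^ pr := by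
                apply mul_le_mul_of_nonneg_right ?_ (Real.rpow_nonneg (norm_nonneg _) _)
                exact CesAux.key_sum α q hα0 hα1 hq0 hqα n k
      _ = (α - q)⁻¹ * K * ‖x‖ ^ pr := by rw [tsum_mul_left, hxnorm]
  have hSnn : (0:ℝ) ≤ ∑ j ∈ Finset.range (n+1), cesKernel α (n - j) * ‖(T ^ j) x‖ ^ pr :=
    Finset.sum_nonneg (fun j _ => mul_nonneg (ha j) (Real.rpow_nonneg (norm_nonneg _) _))
  have e1 : ((α - q)⁻¹ * K * ‖x‖ ^ pr) ^ (pr⁻¹ : ℝ) = C * K ^ (pr⁻¹ : ℝ) * ‖x‖ := by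
    rw [Real.mul_rpow (by positivity) (Real.rpow_nonneg (norm_nonneg _) _),
      Real.mul_rpow (by positivity) hKpos.le]
    rw [← Real.rpow_mul (norm_nonneg x), mul_inv_cancel₀ hpr0.ne', Real.rpow_one]
  have e2 : K ^ (1 - pr⁻¹ : ℝ) * K ^ (pr⁻¹ : ℝ) = K := by
    rw [← Real.rpow_add hKpos, sub_add_cancel, Real.rpow_one]
  have hmain : ∑ j ∈ Finset.range (n+1), cesKernel α (n - j) * ‖(T ^ j) x‖
      ≤ C * (K * ‖x‖) := by
    refine hH.trans ?_
    rw [hsumw]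
    calc K ^ (1 - pr⁻¹ : ℝ) * (∑ j ∈ Finset.range (n+1),
            cesKernel α (n - j) * ‖(T ^ j) x‖ ^ pr) ^ (pr⁻¹ : ℝ)
        ≤ K ^ (1 - pr⁻¹ : ℝ) * ((α - q)⁻¹ * K * ‖x‖ ^ pr) ^ (pr⁻¹ : ℝ) := by
          apply mul_le_mul_of_nonneg_left ?_ (Real.rpow_nonneg hKpos.le _)
          exact Real.rpow_le_rpow hSnn hinner (inv_nonneg.2 hpr0.le)
      _ = K ^ (1 - pr⁻¹ : ℝ) * (C * K ^ (pr⁻¹ : ℝ) * ‖x‖) := by rw [e1]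
      _ = C * (K ^ (1 - pr⁻¹ : ℝ) * K ^ (pr⁻¹ : ℝ)) * ‖x‖ := by ring
      _ = C * (K * ‖x‖) := by rw [e2]; ring
  rw [inv_mul_le_iff₀ hKpos]
  calc ∑ j ∈ Finset.range (n+1), cesKernel α (n - j) * ‖(T ^ j) x‖
      ≤ C * (K * ‖x‖) := hmain
    _ = K * (C * ‖x‖) := by ring
end

section
/- Let 1 ≤ p < ∞ and let T be the unilateral weighted backward shift operator on ℓ^p(ℕ) defined on the canonical basis by T e_1 = 0 and T e_j = (j/(j−1))^{1/p} e_{j−1} for j > 1. Then for every α > 0, T is not (C,α)-Cesàro bounded, i.e. sup_{n ∈ ℕ₀} ‖M_T^α(n)‖ = ∞. -/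
open Filter
open scoped ENNReal

/-- The Cesàro mean of order `α` of `T`:
`M_T^α(n) = (1/k^{α+1}(n)) · Σ_{j=0}^n k^α(n-j) T^j`. -/
noncomputable def cesMean {X : Type*} [NormedAddCommGroup X] [NormedSpace ℂ X]
    (α : ℝ) (T : X →L[ℂ] X) (n : ℕ) : X →L[ℂ] X :=
  (((cesKernel (α + 1) n)⁻¹ : ℝ) : ℂ) •
    ∑ j ∈ Finset.range (n + 1), ((cesKernel α (n - j) : ℝ) : ℂ) • T ^ j

noncomputable def wgt (pr : ℝ) (c j : ℕ) : ℝ := (((c:ℝ)+1)/(((c-j:ℕ):ℝ)+1)) ^ (1/pr)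

lemma cesKernel_pos {α : ℝ} (hα : 0 < α) (n : ℕ) : 0 < cesKernel α n := by
  unfold cesKernel
  have h1 : 0 < Real.Gamma (α + n) := Real.Gamma_pos_of_pos (by positivity)
  have h2 : 0 < Real.Gamma α := Real.Gamma_pos_of_pos hα
  have h3 : 0 < Real.Gamma ((n : ℝ) + 1) := Real.Gamma_pos_of_pos (by positivity)
  positivity

lemma cesKernel_succ {α : ℝ} (hα : 0 < α) (n : ℕ) :
    cesKernel α (n + 1) = (α + n) / (n + 1) * cesKernel α n := by
  unfold cesKernel
  have h1 : Real.Gamma (α + (n + 1 : ℕ)) = (α + n) * Real.Gamma (α + n) := by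
    push_cast
    rw [show α + ((n : ℝ) + 1) = (α + n) + 1 by ring, Real.Gamma_add_one (by positivity)]
  have h2 : Real.Gamma (((n + 1 : ℕ) : ℝ) + 1) = ((n : ℝ) + 1) * Real.Gamma ((n : ℝ) + 1) := by
    push_cast
    rw [show (n : ℝ) + 1 + 1 = ((n : ℝ) + 1) + 1 by ring, Real.Gamma_add_one (by positivity)]
  rw [h1, h2]
  have h3 : Real.Gamma α ≠ 0 := (Real.Gamma_pos_of_pos hα).ne'
  have h4 : Real.Gamma ((n : ℝ) + 1) ≠ 0 := (Real.Gamma_pos_of_pos (by positivity)).ne'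
  have h5 : ((n : ℝ) + 1) ≠ 0 := by positivity
  field_simp

lemma cesKernel_succ_eq {α : ℝ} (hα : 0 < α) (n : ℕ) :
    cesKernel α (n + 1) = α / (n + 1) * cesKernel (α + 1) n := by
  unfold cesKernel
  have h1 : Real.Gamma (α + (n + 1 : ℕ)) = Real.Gamma ((α + 1) + n) := by
    push_cast; ring_nf
  have h2 : Real.Gamma (((n + 1 : ℕ) : ℝ) + 1) = ((n : ℝ) + 1) * Real.Gamma ((n : ℝ) + 1) := by
    push_cast
    rw [show (n : ℝ) + 1 + 1 = ((n : ℝ) + 1) + 1 by ring, Real.Gamma_add_one (by positivity)]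
  have h3 : Real.Gamma (α + 1) = α * Real.Gamma α := Real.Gamma_add_one hα.ne'
  rw [h1, h2, h3]
  have h4 : Real.Gamma α ≠ 0 := (Real.Gamma_pos_of_pos hα).ne'
  have h5 : Real.Gamma ((n : ℝ) + 1) ≠ 0 := (Real.Gamma_pos_of_pos (by positivity)).ne'
  have h6 : ((n : ℝ) + 1) ≠ 0 := by positivity
  have h7 : Real.Gamma ((α+1) + n) ≠ 0 := (Real.Gamma_pos_of_pos (by positivity)).ne'
  field_simp

lemma cesKernel_ratio {α : ℝ} (hα : 0 < α) (i : ℕ) :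
    ∀ N, i ≤ N → cesKernel α N ≤ cesKernel α i * Real.exp (α * (N - i : ℕ) / (i + 1)) := by
  intro N
  induction N with
  | zero => intro h; interval_cases i; simp
  | succ N ih =>
    intro h
    rcases Nat.lt_or_ge i (N + 1) with h' | h'
    · have hiN : i ≤ N := by omega
      have key := ih hiN
      rw [cesKernel_succ hα]
      have hi1 : (0:ℝ) < (i:ℝ) + 1 := by positivity
      have hN1 : (0:ℝ) < (N:ℝ) + 1 := by positivity
      have hiN' : (i:ℝ) + 1 ≤ (N:ℝ) + 1 := by
        have : (i:ℝ) ≤ (N:ℝ) := by exact_mod_cast hiN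
        linarith
      have hfac : (α + N) / (N + 1) ≤ Real.exp (α / (i + 1)) := by
        have h1 : (α + N) / (N + 1) ≤ 1 + α / (i + 1) := by
          rw [div_le_iff₀ hN1]
          have h2 : α / ((i:ℝ) + 1) * ((N:ℝ) + 1) ≥ α := by
            rw [ge_iff_le, ← div_le_iff₀ hN1]  -- α/(N+1) ≤ α/(i+1)
            exact div_le_div_of_nonneg_left hα.le hi1 hiN'
          nlinarith
        calc (α + N) / (N + 1) ≤ 1 + α / (i + 1) := h1
          _ ≤ Real.exp (α / (i + 1)) := by
            have := Real.add_one_le_exp (α / (i + 1))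
            linarith
      have hexp : Real.exp (α / (i+1)) * Real.exp (α * (N - i : ℕ) / (i + 1))
          = Real.exp (α * (N + 1 - i : ℕ) / (i + 1)) := by
        rw [← Real.exp_add]
        congr 1
        have hc : ((N + 1 - i : ℕ) : ℝ) = ((N - i : ℕ) : ℝ) + 1 := by
          rw [Nat.succ_sub hiN]; push_cast; ring
        rw [hc]; ring
      calc (α + N) / (N + 1) * cesKernel α N
          ≤ Real.exp (α / (i+1)) * (cesKernel α i * Real.exp (α * (N - i : ℕ) / (i + 1))) := by
            apply mul_le_mul hfac key (cesKernel_pos hα N).le (Real.exp_nonneg _)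
        _ = cesKernel α i * (Real.exp (α / (i+1)) * Real.exp (α * (N - i : ℕ) / (i + 1))) := by
            ring
        _ = cesKernel α i * Real.exp (α * (N + 1 - i : ℕ) / (i + 1)) := by rw [hexp]
    · have : i = N + 1 := by omega
      subst this
      rw [Nat.sub_self]
      simp

lemma single_apply' (p : ℝ≥0∞) [Fact (1 ≤ p)] (c i : ℕ) :
    (lp.single p c (1:ℂ) : ∀ _ : ℕ, ℂ) i = if i = c then 1 else 0 := by
  rcases eq_or_ne i c with h | h
  · subst h; simp [lp.single_apply_self]
  · simp [lp.single_apply_ne p c _ h, h]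

lemma shift_pow (p : ℝ≥0∞) [Fact (1 ≤ p)]
    (T : lp (fun _ : ℕ => ℂ) p →L[ℂ] lp (fun _ : ℕ => ℂ) p)
    (hTj : ∀ j : ℕ, 1 ≤ j →
      T (lp.single p j 1)
        = (((((j : ℝ) + 1) / (j : ℝ)) ^ (1 / p.toReal) : ℝ) : ℂ) • lp.single p (j - 1) 1) :
    ∀ j c : ℕ, j ≤ c → (T ^ j) (lp.single p c 1)
      = ((((((c : ℝ) + 1) / (((c - j : ℕ) : ℝ) + 1)) ^ (1 / p.toReal) : ℝ)) : ℂ) •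
          lp.single p (c - j) 1 := by
  intro j
  induction j with
  | zero =>
    intro c _
    simp [Real.one_rpow, div_self (show ((c:ℝ)+1) ≠ 0 by positivity)]
  | succ j ih =>
    intro c hc
    have hj : j ≤ c := by omega
    have h1 : 1 ≤ c - j := by omega
    have hstep := hTj (c - j) h1
    have hpow : T ^ (j+1) = T * T ^ j := by rw [pow_succ']
    rw [hpow, ContinuousLinearMap.mul_apply, ih c hj, map_smul, hstep, smul_smul]
    have hsub : c - j - 1 = c - (j+1) := by omega
    rw [hsub]
    congr 1
    rw [← Complex.ofReal_mul]
    congr 1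
    have hb1 : (0:ℝ) ≤ ((c:ℝ)+1) / (((c-j:ℕ):ℝ)+1) := by positivity
    have hb2 : (0:ℝ) ≤ (((c-j:ℕ):ℝ)+1) / ((c-j:ℕ):ℝ) := by positivity
    rw [← Real.mul_rpow hb1 hb2]
    congr 1
    have e1 : ((c - (j+1) : ℕ) : ℝ) + 1 = ((c - j : ℕ) : ℝ) := by
      have : (c - j) = (c - (j+1)) + 1 := by omega
      rw [this]; push_cast; ring
    have hcj0 : ((c - j : ℕ) : ℝ) ≠ 0 := by
      have : 0 < c - j := h1
      positivity
    have hcj1 : ((c - j : ℕ) : ℝ) + 1 ≠ 0 := by positivity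
    rw [e1, div_mul_div_comm, mul_comm ((c:ℝ)+1) (((c-j:ℕ):ℝ)+1), mul_div_mul_left _ _ hcj1]

lemma shift_pow_zero (p : ℝ≥0∞) [Fact (1 ≤ p)]
    (T : lp (fun _ : ℕ => ℂ) p →L[ℂ] lp (fun _ : ℕ => ℂ) p)
    (hT0 : T (lp.single p 0 1) = 0)
    (hTj : ∀ j : ℕ, 1 ≤ j →
      T (lp.single p j 1)
        = (((((j : ℝ) + 1) / (j : ℝ)) ^ (1 / p.toReal) : ℝ) : ℂ) • lp.single p (j - 1) 1) :
    ∀ j c : ℕ, c < j → (T ^ j) (lp.single p c 1) = 0 := by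
  have key : ∀ c : ℕ, (T ^ (c+1)) (lp.single p c 1) = 0 := by
    intro c
    have hpow : T ^ (c+1) = T * T ^ c := by rw [pow_succ']
    rw [hpow, ContinuousLinearMap.mul_apply, shift_pow p T hTj c c le_rfl, map_smul,
      Nat.sub_self, hT0, smul_zero]
  intro j c hcj
  have hd : j = (j - (c+1)) + (c+1) := by omega
  rw [hd, pow_add, ContinuousLinearMap.mul_apply, key, map_zero]

-- coordinates of x
lemma x_apply (p : ℝ≥0∞) [Fact (1 ≤ p)] (n i : ℕ) :
    ((∑ c ∈ Finset.range (n+1), lp.single p c (1:ℂ)) : ∀ _ : ℕ, ℂ) i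
      = if i ∈ Finset.range (n+1) then 1 else 0 := by
  rw [Finset.sum_apply]
  simp only [single_apply']
  exact Finset.sum_ite_eq (Finset.range (n+1)) i (fun _ => 1)

-- coordinates of T^j x
lemma Tjx_apply (p : ℝ≥0∞) [Fact (1 ≤ p)]
    (T : lp (fun _ : ℕ => ℂ) p →L[ℂ] lp (fun _ : ℕ => ℂ) p)
    (hT0 : T (lp.single p 0 1) = 0)
    (hTj : ∀ j : ℕ, 1 ≤ j →
      T (lp.single p j 1)
        = (((((j : ℝ) + 1) / (j : ℝ)) ^ (1 / p.toReal) : ℝ) : ℂ) • lp.single p (j - 1) 1)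
    (n j m : ℕ) (hj : j ≤ n) :
    (((T ^ j) (∑ c ∈ Finset.range (n+1), lp.single p c (1:ℂ))) : ∀ _ : ℕ, ℂ) m
      = if m + j ≤ n then ((wgt p.toReal (m+j) j : ℝ) : ℂ) else 0 := by
  rw [map_sum, lp.coeFn_sum, Finset.sum_apply]

  rcases le_or_gt (m + j) n with h | h
  · rw [if_pos h]
    rw [Finset.sum_eq_single_of_mem (m + j) (Finset.mem_range.mpr (by omega))]
    · rw [shift_pow p T hTj j (m+j) (by omega), lp.coeFn_smul, Pi.smul_apply]
      have : m + j - j = m := by omega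
      rw [this, single_apply', if_pos rfl, smul_eq_mul, mul_one]
      simp [wgt, Nat.add_sub_cancel]
    · intro c _ hne
      rcases lt_or_ge c j with hcj | hcj
      · rw [shift_pow_zero p T hT0 hTj j c hcj]; simp
      · rw [shift_pow p T hTj j c hcj, lp.coeFn_smul, Pi.smul_apply, single_apply',
          if_neg (by omega), smul_zero]
  · rw [if_neg (by omega)]
    apply Finset.sum_eq_zero
    intro c hc
    rw [Finset.mem_range] at hc
    rcases lt_or_ge c j with hcj | hcj
    · rw [shift_pow_zero p T hT0 hTj j c hcj]; simp
    · rw [shift_pow p T hTj j c hcj, lp.coeFn_smul, Pi.smul_apply, single_apply',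
        if_neg (by omega), smul_zero]


lemma y_apply (p : ℝ≥0∞) [Fact (1 ≤ p)]
    (T : lp (fun _ : ℕ => ℂ) p →L[ℂ] lp (fun _ : ℕ => ℂ) p)
    (hT0 : T (lp.single p 0 1) = 0)
    (hTj : ∀ j : ℕ, 1 ≤ j →
      T (lp.single p j 1)
        = (((((j : ℝ) + 1) / (j : ℝ)) ^ (1 / p.toReal) : ℝ) : ℂ) • lp.single p (j - 1) 1)
    (α : ℝ) (n m : ℕ) :
    ((cesMean α T n (∑ c ∈ Finset.range (n+1), lp.single p c (1:ℂ))) : ∀ _ : ℕ, ℂ) m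
      = (((cesKernel (α+1) n)⁻¹ * ∑ j ∈ Finset.range (n+1),
          cesKernel α (n-j) * (if m + j ≤ n then wgt p.toReal (m+j) j else 0) : ℝ) : ℂ) := by
  rw [cesMean, ContinuousLinearMap.smul_apply, ContinuousLinearMap.sum_apply,
    lp.coeFn_smul, Pi.smul_apply]
  have hsum : (((∑ j ∈ Finset.range (n+1),
      (((cesKernel α (n-j) : ℝ) : ℂ) • T ^ j) (∑ c ∈ Finset.range (n+1), lp.single p c (1:ℂ)))
        : lp (fun _ : ℕ => ℂ) p) : ∀ _ : ℕ, ℂ) m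
      = ∑ j ∈ Finset.range (n+1), ((cesKernel α (n-j)
          * (if m + j ≤ n then wgt p.toReal (m+j) j else 0) : ℝ) : ℂ) := by
    rw [lp.coeFn_sum, Finset.sum_apply]
    apply Finset.sum_congr rfl
    intro j hjr
    rw [ContinuousLinearMap.smul_apply, lp.coeFn_smul, Pi.smul_apply,
      Tjx_apply p T hT0 hTj n j m (by rw [Finset.mem_range] at hjr; omega)]
    push_cast
    split_ifs <;> simp
  rw [hsum]
  push_cast
  rw [smul_eq_mul, Finset.mul_sum]

lemma coord_lb {α : ℝ} (hα : 0 < α) {pr : ℝ} (hpr : 0 < pr) {n m : ℕ}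
    (hn : 4 ≤ n) (hm : m ≤ n / 4) :
    α / (16 * Real.exp (4 * α)) * (((n : ℝ) / 2) / ((m : ℝ) + 1)) ^ (1 / pr)
      ≤ (cesKernel (α + 1) n)⁻¹ * ∑ j ∈ Finset.range (n + 1),
          cesKernel α (n - j) * (if m + j ≤ n then wgt pr (m + j) j else 0) := by
  have hκ : 0 < cesKernel (α + 1) n := cesKernel_pos (by linarith) n
  have hE : 0 < Real.exp (4 * α) := Real.exp_pos _
  have hQ : 0 ≤ (((n : ℝ) / 2) / ((m : ℝ) + 1)) ^ (1 / pr) := by positivity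
  set Q := (((n : ℝ) / 2) / ((m : ℝ) + 1)) ^ (1 / pr) with hQdef
  set J := Finset.Ico (n - n / 2) (n - n / 4) with hJ
  -- term-wise bound on J
  have hterm : ∀ j ∈ J,
      α / ((n + 1) * Real.exp (4 * α)) * cesKernel (α + 1) n * Q
        ≤ cesKernel α (n - j) * (if m + j ≤ n then wgt pr (m + j) j else 0) := by
    intro j hj
    rw [hJ, Finset.mem_Ico] at hj
    have hmj : m + j ≤ n := by omega
    rw [if_pos hmj]
    -- kernel part
    have hi1 : n / 4 + 1 ≤ n - j := by omega
    have hi2 : n - j ≤ n + 1 := by omega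
    have hk1 : cesKernel α (n + 1) ≤ cesKernel α (n - j) * Real.exp (4 * α) := by
      have h1 := cesKernel_ratio hα (n - j) (n + 1) hi2
      have h2 : α * ((n + 1 - (n - j) : ℕ) : ℝ) / (((n - j : ℕ) : ℝ) + 1) ≤ 4 * α := by
        rw [div_le_iff₀ (by positivity)]
        have hnat : ((n + 1 - (n - j) : ℕ) : ℝ) ≤ 4 * (((n - j : ℕ) : ℝ) + 1) := by
          have : (n + 1 - (n - j)) ≤ 4 * ((n - j) + 1) := by omega
          push_cast
          exact_mod_cast this
        nlinarith
      calc cesKernel α (n + 1)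
          ≤ cesKernel α (n - j) * Real.exp (α * ((n + 1 - (n - j) : ℕ) : ℝ) / (((n - j : ℕ) : ℝ) + 1)) := h1
        _ ≤ cesKernel α (n - j) * Real.exp (4 * α) := by
            apply mul_le_mul_of_nonneg_left (Real.exp_le_exp.mpr h2) (cesKernel_pos hα _).le
    have hk2 : α / (n + 1) * cesKernel (α + 1) n ≤ cesKernel α (n - j) * Real.exp (4 * α) := by
      rw [← cesKernel_succ_eq hα n]; exact hk1
    have hk3 : α / ((n + 1) * Real.exp (4 * α)) * cesKernel (α + 1) n ≤ cesKernel α (n - j) := by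
      have hn1 : (0:ℝ) < (n:ℝ) + 1 := by positivity
      have h := hk2
      rw [div_mul_eq_mul_div, div_le_iff₀ hn1] at h
      rw [div_mul_eq_mul_div, div_le_iff₀ (by positivity)]
      calc α * cesKernel (α + 1) n ≤ cesKernel α (n - j) * Real.exp (4 * α) * ((n:ℝ) + 1) := h
        _ = cesKernel α (n - j) * (((n:ℝ) + 1) * Real.exp (4 * α)) := by ring
    -- weight part
    have hw : Q ≤ wgt pr (m + j) j := by
      rw [wgt, Nat.add_sub_cancel]
      apply Real.rpow_le_rpow (by positivity) _ (by positivity)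
      apply div_le_div_of_nonneg_right _ (by positivity)
      · have : n ≤ 2 * (m + j) + 2 := by omega
        have := (Nat.cast_le (α := ℝ)).mpr this
        push_cast at this ⊢
        linarith
    calc α / ((n + 1) * Real.exp (4 * α)) * cesKernel (α + 1) n * Q
        ≤ cesKernel α (n - j) * Q := by
          apply mul_le_mul_of_nonneg_right hk3 hQ
      _ ≤ cesKernel α (n - j) * wgt pr (m + j) j := by
          apply mul_le_mul_of_nonneg_left hw (cesKernel_pos hα _).le
  -- sum over J
  have hcard : (J.card : ℝ) = ((n - n / 4) - (n - n / 2) : ℕ) := by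
    rw [hJ, Nat.card_Ico]
  have hL : ((n : ℝ) + 1) / 16 ≤ (J.card : ℝ) := by
    rw [hcard]
    have h16 : n + 1 ≤ 16 * ((n - n / 4) - (n - n / 2)) := by omega
    have := (Nat.cast_le (α := ℝ)).mpr h16
    push_cast at this ⊢
    linarith
  have hsumJ : (J.card : ℝ) * (α / ((n + 1) * Real.exp (4 * α)) * cesKernel (α + 1) n * Q)
      ≤ ∑ j ∈ J, cesKernel α (n - j) * (if m + j ≤ n then wgt pr (m + j) j else 0) := by
    have := Finset.card_nsmul_le_sum J _ _ hterm
    simpa [nsmul_eq_mul] using this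
  have hsub : ∑ j ∈ J, cesKernel α (n - j) * (if m + j ≤ n then wgt pr (m + j) j else 0)
      ≤ ∑ j ∈ Finset.range (n + 1), cesKernel α (n - j) * (if m + j ≤ n then wgt pr (m + j) j else 0) := by
    apply Finset.sum_le_sum_of_subset_of_nonneg
    · intro j hj
      rw [hJ, Finset.mem_Ico] at hj
      rw [Finset.mem_range]
      omega
    · intro j _ _
      have hk := (cesKernel_pos hα (n - j)).le
      have hw : (0:ℝ) ≤ wgt pr (m + j) j := by rw [wgt]; positivity
      split_ifs
      · exact mul_nonneg hk hw
      · simp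
  -- combine
  have hchain : ((n : ℝ) + 1) / 16 * (α / ((n + 1) * Real.exp (4 * α)) * cesKernel (α + 1) n * Q)
      ≤ ∑ j ∈ Finset.range (n + 1), cesKernel α (n - j) * (if m + j ≤ n then wgt pr (m + j) j else 0) := by
    refine le_trans (le_trans ?_ hsumJ) hsub
    apply mul_le_mul_of_nonneg_right hL
    positivity
  calc α / (16 * Real.exp (4 * α)) * Q
      = ((n : ℝ) + 1) / 16 * (α / ((n + 1) * Real.exp (4 * α)) * Q) := by
        field_simp
    _ ≤ (cesKernel (α + 1) n)⁻¹ * ∑ j ∈ Finset.range (n + 1),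
          cesKernel α (n - j) * (if m + j ≤ n then wgt pr (m + j) j else 0) := by
        rw [inv_mul_eq_div, le_div_iff₀ hκ]
        calc ((n : ℝ) + 1) / 16 * (α / ((n + 1) * Real.exp (4 * α)) * Q) * cesKernel (α + 1) n
            = ((n : ℝ) + 1) / 16 * (α / ((n + 1) * Real.exp (4 * α)) * cesKernel (α + 1) n * Q) := by
              ring
          _ ≤ _ := hchain

lemma xnorm (p : ℝ≥0∞) [Fact (1 ≤ p)] (hpr : 0 < p.toReal) (n : ℕ) :
    ‖∑ c ∈ Finset.range (n+1), lp.single p c (1:ℂ)‖ ^ p.toReal = (n : ℝ) + 1 := by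
  rw [lp.norm_rpow_eq_tsum hpr]
  have h : ∀ i : ℕ,
      ‖((∑ c ∈ Finset.range (n+1), lp.single p c (1:ℂ) : lp (fun _ : ℕ => ℂ) p)
        : ∀ _ : ℕ, ℂ) i‖ ^ p.toReal = if i ∈ Finset.range (n+1) then 1 else 0 := by
    intro i
    rw [lp.coeFn_sum, Finset.sum_apply]
    simp only [single_apply']
    rw [Finset.sum_ite_eq (Finset.range (n+1)) i (fun _ => 1)]
    split_ifs <;> simp [Real.zero_rpow hpr.ne', Real.one_rpow]
  rw [tsum_congr h, tsum_eq_sum (s := Finset.range (n+1)) (by intro b hb; rw [if_neg hb]),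
    Finset.sum_ite_mem, Finset.inter_self, Finset.sum_const, Finset.card_range, nsmul_eq_mul,
    mul_one]
  push_cast
  ring

lemma main_est (p : ℝ≥0∞) [Fact (1 ≤ p)] (hp : p ≠ ⊤)
    (T : lp (fun _ : ℕ => ℂ) p →L[ℂ] lp (fun _ : ℕ => ℂ) p)
    (hT0 : T (lp.single p 0 1) = 0)
    (hTj : ∀ j : ℕ, 1 ≤ j →
      T (lp.single p j 1)
        = (((((j : ℝ) + 1) / (j : ℝ)) ^ (1 / p.toReal) : ℝ) : ℂ) • lp.single p (j - 1) 1)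
    {α : ℝ} (hα : 0 < α) (n : ℕ) (hn : 4 ≤ n) :
    (α / (16 * Real.exp (4 * α))) ^ p.toReal / 4
        * (∑ m ∈ Finset.range (n / 4 + 1), 1 / ((m : ℝ) + 1))
      ≤ ‖cesMean α T n‖ ^ p.toReal := by
  have hp0 : p ≠ 0 := by
    have h1 : (1 : ℝ≥0∞) ≤ p := Fact.out
    intro h; rw [h] at h1; simp at h1
  have hpr : 0 < p.toReal := ENNReal.toReal_pos hp0 hp
  set pr := p.toReal with hprdef
  set c0 := α / (16 * Real.exp (4 * α)) with hc0def
  have hc0 : 0 < c0 := by positivity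
  have hc0p : 0 < c0 ^ pr := Real.rpow_pos_of_pos hc0 pr
  set x := ∑ c ∈ Finset.range (n+1), lp.single p c (1:ℂ) with hxdef
  set y := cesMean α T n x with hydef
  -- coordinate lower bound
  have h1 : ∀ m : ℕ, m ≤ n / 4 →
      c0 ^ pr * (((n : ℝ) / 2) / ((m : ℝ) + 1)) ≤ ‖(y : ∀ _ : ℕ, ℂ) m‖ ^ pr := by
    intro m hm
    have hy := y_apply p T hT0 hTj α n m
    rw [← hxdef, ← hydef] at hy
    rw [hy, Complex.norm_real, Real.norm_eq_abs]
    have hlb := coord_lb hα hpr hn hm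
    have hQ : (0:ℝ) ≤ (((n : ℝ) / 2) / ((m : ℝ) + 1)) ^ (1 / pr) := by positivity
    have habs : c0 * (((n : ℝ) / 2) / ((m : ℝ) + 1)) ^ (1 / pr)
        ≤ |(cesKernel (α + 1) n)⁻¹ * ∑ j ∈ Finset.range (n + 1),
            cesKernel α (n - j) * (if m + j ≤ n then wgt pr (m + j) j else 0)| :=
      le_trans hlb (le_abs_self _)
    have hmono := Real.rpow_le_rpow (by positivity) habs hpr.le
    rw [Real.mul_rpow hc0.le hQ] at hmono
    have hQQ : ((((n : ℝ) / 2) / ((m : ℝ) + 1)) ^ (1 / pr)) ^ pr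
        = ((n : ℝ) / 2) / ((m : ℝ) + 1) := by
      rw [← Real.rpow_mul (by positivity), one_div, inv_mul_cancel₀ hpr.ne', Real.rpow_one]
    rw [hQQ] at hmono
    exact hmono
  -- sum of coordinates vs norm
  have h2 : ∑ m ∈ Finset.range (n / 4 + 1), ‖(y : ∀ _ : ℕ, ℂ) m‖ ^ pr ≤ ‖y‖ ^ pr := by
    rw [lp.norm_rpow_eq_tsum hpr]
    apply Summable.sum_le_tsum
    · intro m _
      positivity
    · exact (lp.memℓp y).summable hpr
  -- operator norm bound
  have h3 : ‖y‖ ^ pr ≤ ‖cesMean α T n‖ ^ pr * ((n : ℝ) + 1) := by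
    have hle : ‖y‖ ≤ ‖cesMean α T n‖ * ‖x‖ := (cesMean α T n).le_opNorm x
    have := Real.rpow_le_rpow (norm_nonneg _) hle hpr.le
    rw [Real.mul_rpow (norm_nonneg _) (norm_nonneg _), xnorm p hpr n] at this
    exact this
  -- combine
  have hH : (0:ℝ) ≤ ∑ m ∈ Finset.range (n / 4 + 1), 1 / ((m : ℝ) + 1) := by positivity
  set H := ∑ m ∈ Finset.range (n / 4 + 1), 1 / ((m : ℝ) + 1) with hHdef
  have h4 : c0 ^ pr * ((n : ℝ) / 2) * H ≤ ‖cesMean α T n‖ ^ pr * ((n : ℝ) + 1) := by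
    have hs : c0 ^ pr * ((n : ℝ) / 2) * H
        = ∑ m ∈ Finset.range (n / 4 + 1), c0 ^ pr * (((n : ℝ) / 2) / ((m : ℝ) + 1)) := by
      rw [hHdef, Finset.mul_sum]
      apply Finset.sum_congr rfl
      intro m _
      field_simp
    rw [hs]
    refine le_trans (le_trans (Finset.sum_le_sum ?_) h2) h3
    intro m hmr
    exact h1 m (by rw [Finset.mem_range] at hmr; omega)
  have hn4 : (4:ℝ) ≤ (n:ℝ) := by exact_mod_cast hn
  have hM : (0:ℝ) ≤ ‖cesMean α T n‖ ^ pr := Real.rpow_nonneg (norm_nonneg _) pr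
  nlinarith [mul_nonneg hc0p.le hH]

/-- Let `1 ≤ p < ∞` and let `T` be the unilateral weighted backward shift on `ℓ^p(ℕ)`
with weights `w_j = (j/(j-1))^{1/p}` (basis `e j = lp.single p j 1`, `j = 0,1,2,...`
corresponding to the canonical basis `e_1, e_2, ...`). Then for every `α > 0`, `T` is not
`(C,α)`-Cesàro bounded: `sup_n ‖M_T^α(n)‖ = ∞`. -/
theorem stmt3 (p : ℝ≥0∞) [Fact (1 ≤ p)] (hp : p ≠ ⊤)
    (T : lp (fun _ : ℕ => ℂ) p →L[ℂ] lp (fun _ : ℕ => ℂ) p)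
    (hT0 : T (lp.single p 0 1) = 0)
    (hTj : ∀ j : ℕ, 1 ≤ j →
      T (lp.single p j 1)
        = (((((j : ℝ) + 1) / (j : ℝ)) ^ (1 / p.toReal) : ℝ) : ℂ) • lp.single p (j - 1) 1) :
    ∀ α : ℝ, 0 < α → ¬ ∃ C : ℝ, ∀ n : ℕ, ‖cesMean α T n‖ ≤ C := by
  intro α hα
  rintro ⟨C, hC⟩
  have hp0 : p ≠ 0 := by
    have h1 : (1 : ℝ≥0∞) ≤ p := Fact.out
    intro h; rw [h] at h1; simp at h1
  have hpr : 0 < p.toReal := ENNReal.toReal_pos hp0 hp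
  set pr := p.toReal with hprdef
  set c0 := α / (16 * Real.exp (4 * α)) with hc0def
  have hc0 : 0 < c0 := by positivity
  have hc0p : 0 < c0 ^ pr := Real.rpow_pos_of_pos hc0 pr
  have hC0 : 0 ≤ C := le_trans (norm_nonneg _) (hC 0)
  have hdiv := Real.tendsto_sum_range_one_div_nat_succ_atTop
  rw [Filter.tendsto_atTop_atTop] at hdiv
  obtain ⟨k, hk⟩ := hdiv ((4 * C ^ pr + 4) / c0 ^ pr)
  set n := 4 * (k + 1) with hndef
  have hn4 : 4 ≤ n := by omega
  have hest := main_est p hp T hT0 hTj hα n hn4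
  have hmod : n / 4 + 1 = k + 2 := by omega
  have hHge : (4 * C ^ pr + 4) / c0 ^ pr
      ≤ ∑ m ∈ Finset.range (n / 4 + 1), 1 / ((m : ℝ) + 1) := by
    rw [hmod]
    exact hk (k + 2) (by omega)
  have hCle : ‖cesMean α T n‖ ≤ C := hC n
  have hfin : ‖cesMean α T n‖ ^ pr ≤ C ^ pr := Real.rpow_le_rpow (norm_nonneg _) hCle hpr.le
  have hkey : c0 ^ pr / 4 * ((4 * C ^ pr + 4) / c0 ^ pr) ≤ C ^ pr := by
    refine le_trans ?_ (le_trans hest hfin)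
    exact mul_le_mul_of_nonneg_left hHge (by positivity)
  have hexp : c0 ^ pr / 4 * ((4 * C ^ pr + 4) / c0 ^ pr) = C ^ pr + 1 := by
    field_simp
  rw [hexp] at hkey
  linarith
end

section
/- Let α > 1 and let T be an absolutely (C,α)-Cesàro bounded operator on a complex Banach space X. Then either ‖T^n‖ = o(n) (i.e. ‖T^n‖/n → 0 as n → ∞), or T is not absolutely (C,1)-Cesàro bounded. -/
open Filter
open scoped ENNReal

lemma cesKernel_one (n : ℕ) : cesKernel 1 n = 1 := by
  have h1 : (1 : ℝ) + n = n + 1 := by ring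
  rw [cesKernel, h1, Real.Gamma_one, Real.Gamma_nat_eq_factorial]
  have : (Nat.factorial n : ℝ) ≠ 0 := by exact_mod_cast n.factorial_ne_zero
  field_simp

lemma cesKernel_two (n : ℕ) : cesKernel 2 n = n + 1 := by
  have h1 : (2 : ℝ) + n = (n + 1 : ℕ) + 1 := by push_cast; ring
  have h2 : Real.Gamma 2 = 1 := by
    rw [show (2:ℝ) = 1 + 1 by norm_num, Real.Gamma_add_one one_ne_zero, Real.Gamma_one]; norm_num
  rw [cesKernel, h1, h2, Real.Gamma_nat_eq_factorial, Real.Gamma_nat_eq_factorial]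
  have h3 : (Nat.factorial n : ℝ) ≠ 0 := by exact_mod_cast n.factorial_ne_zero
  rw [Nat.factorial_succ]
  push_cast
  field_simp

/-- Let `α > 1` and `T` be absolutely `(C,α)`-Cesàro bounded on a complex Banach space.
Then either `‖T^n‖ = o(n)` or `T` is not absolutely `(C,1)`-Cesàro bounded. -/
theorem stmt9 {X : Type*} [NormedAddCommGroup X] [NormedSpace ℂ X] [CompleteSpace X]
    (α : ℝ) (hα : 1 < α) (T : X →L[ℂ] X) (hT : AbsCesaroBounded α T) :
    Tendsto (fun n : ℕ => ‖T ^ n‖ / (n : ℝ)) atTop (nhds 0) ∨ ¬ AbsCesaroBounded 1 T := by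
  by_cases h : AbsCesaroBounded 1 T
  · left
    obtain ⟨C, hC, hb⟩ := h
    -- The basic estimate: ∑_{j≤n} ‖T^j x‖ ≤ C (n+1) ‖x‖
    have hsum : ∀ (n : ℕ) (x : X),
        ∑ j ∈ Finset.range (n + 1), ‖(T ^ j) x‖ ≤ C * (n + 1) * ‖x‖ := by
      intro n x
      have := hb n x
      rw [show (1:ℝ) + 1 = 2 by norm_num, cesKernel_two] at this
      simp only [cesKernel_one, one_mul] at this
      have hn : (0:ℝ) < (n:ℝ) + 1 := by positivity
      rw [inv_mul_le_iff₀ hn] at this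
      calc ∑ j ∈ Finset.range (n + 1), ‖(T ^ j) x‖ ≤ ((n:ℝ)+1) * (C * ‖x‖) := this
        _ = C * (n + 1) * ‖x‖ := by ring
    by_cases hz : ∃ m, ‖T ^ m‖ = 0
    · -- nilpotent case
      obtain ⟨m, hm⟩ := hz
      refine Tendsto.congr' ?_ (tendsto_const_nhds (f := atTop))
      filter_upwards [eventually_ge_atTop m] with n hn
      have hTn : T ^ n = T ^ (n - m) * T ^ m := by
        rw [← pow_add]; congr 1; omega
      have hle : ‖T ^ n‖ ≤ ‖T ^ (n - m)‖ * ‖T ^ m‖ := hTn ▸ norm_mul_le _ _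
      rw [hm, mul_zero] at hle
      have : ‖T ^ n‖ = 0 := le_antisymm hle (norm_nonneg _)
      rw [this, zero_div]
    · push_neg at hz
      have hpos : ∀ m : ℕ, 0 < ‖T ^ m‖ := fun m =>
        lt_of_le_of_ne (norm_nonneg _) (Ne.symm (hz m))
      -- ‖T^n‖ ≤ C(n+1)
      have hO : ∀ n : ℕ, ‖T ^ n‖ ≤ C * (n + 1) := by
        intro n
        refine ContinuousLinearMap.opNorm_le_bound _ (by positivity) fun x => ?_
        calc ‖(T ^ n) x‖ ≤ ∑ j ∈ Finset.range (n + 1), ‖(T ^ j) x‖ :=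
              Finset.single_le_sum (f := fun j => ‖(T ^ j) x‖) (fun j _ => norm_nonneg _)
                (Finset.self_mem_range_succ n)
          _ ≤ C * (n + 1) * ‖x‖ := hsum n x
      set S : ℕ → ℝ := fun n => ∑ i ∈ Finset.range (n + 1), ‖T ^ i‖⁻¹ with hS
      have hSpos : ∀ n, 0 < S n := fun n =>
        Finset.sum_pos (fun i _ => inv_pos.2 (hpos i)) ⟨0, Finset.mem_range.2 (Nat.succ_pos n)⟩
      -- key: ‖T^n‖ * S n ≤ C (n+1)
      have hkey : ∀ n : ℕ, ‖T ^ n‖ * S n ≤ C * (n + 1) := by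
        intro n
        have hop : ‖T ^ n‖ ≤ C * (n + 1) / S n := by
          refine ContinuousLinearMap.opNorm_le_bound _ (by positivity) fun x => ?_
          rw [div_mul_eq_mul_div, le_div_iff₀ (hSpos n)]
          have hterm : ∀ i ∈ Finset.range (n + 1),
              ‖(T ^ n) x‖ * ‖T ^ (n - i)‖⁻¹ ≤ ‖(T ^ i) x‖ := by
            intro i hi
            have hi' : i ≤ n := Nat.lt_succ_iff.mp (Finset.mem_range.mp hi)
            have : (T ^ n) x = (T ^ (n - i)) ((T ^ i) x) := by
              rw [← ContinuousLinearMap.comp_apply, ← ContinuousLinearMap.mul_def, ← pow_add]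
              congr 2; omega
            have hle : ‖(T ^ n) x‖ ≤ ‖T ^ (n - i)‖ * ‖(T ^ i) x‖ :=
              this ▸ ContinuousLinearMap.le_opNorm _ _
            rw [mul_inv_le_iff₀ (hpos (n - i)), mul_comm ‖(T ^ i) x‖]
            exact hle
          have hrefl : ∑ i ∈ Finset.range (n + 1), ‖T ^ (n - i)‖⁻¹ = S n := by
            rw [hS]
            exact Finset.sum_range_reflect (fun i => ‖T ^ i‖⁻¹) (n + 1)
          calc ‖(T ^ n) x‖ * S n = ∑ i ∈ Finset.range (n + 1), ‖(T ^ n) x‖ * ‖T ^ (n - i)‖⁻¹ := by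
                rw [← Finset.mul_sum, hrefl]
            _ ≤ ∑ i ∈ Finset.range (n + 1), ‖(T ^ i) x‖ := Finset.sum_le_sum hterm
            _ ≤ C * (n + 1) * ‖x‖ := hsum n x
        calc ‖T ^ n‖ * S n ≤ (C * (n + 1) / S n) * S n :=
              mul_le_mul_of_nonneg_right hop (hSpos n).le
          _ = C * (n + 1) := div_mul_cancel₀ _ (hSpos n).ne'
      -- harmonic lower bound on S n
      set H : ℕ → ℝ := fun n => ∑ i ∈ Finset.range n, (1 / (i + 1) : ℝ) with hH
      have hHpos : ∀ n : ℕ, 0 < H (n + 1) :=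
        fun n => Finset.sum_pos (fun i _ => by positivity) ⟨0, Finset.mem_range.2 n.succ_pos⟩
      have hSH : ∀ n, H (n + 1) / C ≤ S n := by
        intro n
        rw [hH, hS, Finset.sum_div]
        refine Finset.sum_le_sum fun i _ => ?_
        have h1 := one_div_le_one_div_of_le (hpos i) (hO i)
        have heq : (1 / ((i:ℝ) + 1)) / C = 1 / (C * ((i:ℝ) + 1)) := by
          rw [div_div, mul_comm]
        rw [heq, ← one_div]
        exact h1
      -- squeeze
      have hbound : ∀ n : ℕ, 1 ≤ n → ‖T ^ n‖ / (n : ℝ) ≤ 2 * C ^ 2 / H (n + 1) := by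
        intro n hn
        have hn' : (0:ℝ) < n := by exact_mod_cast hn
        rw [div_le_div_iff₀ hn' (hHpos n)]
        have step1 : ‖T ^ n‖ * H (n + 1) ≤ C * (‖T ^ n‖ * S n) := by
          have : H (n + 1) ≤ C * S n := by
            rw [← div_le_iff₀' hC]; exact hSH n
          calc ‖T ^ n‖ * H (n + 1) ≤ ‖T ^ n‖ * (C * S n) :=
                mul_le_mul_of_nonneg_left this (norm_nonneg _)
            _ = C * (‖T ^ n‖ * S n) := by ring
        calc ‖T ^ n‖ * H (n + 1) ≤ C * (‖T ^ n‖ * S n) := step1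
          _ ≤ C * (C * (n + 1)) := mul_le_mul_of_nonneg_left (hkey n) hC.le
          _ ≤ C * (C * (2 * n)) := by
              refine mul_le_mul_of_nonneg_left (mul_le_mul_of_nonneg_left ?_ hC.le) hC.le
              have : (1:ℝ) ≤ n := by exact_mod_cast hn
              linarith
          _ = 2 * C ^ 2 * n := by ring
      have hHtop : Tendsto (fun n : ℕ => H (n + 1)) atTop atTop :=
        Real.tendsto_sum_range_one_div_nat_succ_atTop.comp (tendsto_add_atTop_nat 1)
      have hlim : Tendsto (fun n : ℕ => 2 * C ^ 2 / H (n + 1)) atTop (nhds 0) :=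
        Tendsto.div_atTop tendsto_const_nhds hHtop
      refine tendsto_of_tendsto_of_tendsto_of_le_of_le' tendsto_const_nhds hlim ?_ ?_
      · exact Eventually.of_forall fun n => by positivity
      · filter_upwards [eventually_ge_atTop 1] with n hn using hbound n hn
  · exact Or.inr h
end

section
/- Let 0 < α ≤ 1 and let T be an absolutely (C,α)-Cesàro bounded operator on a complex Banach space X. Then ‖M_T^α(n+1) − M_T^α(n)‖ → 0 as n → ∞. -/
open Filter
open scoped ENNReal

lemma ces_zero (α : ℝ) (hα : Real.Gamma α ≠ 0) : cesKernel α 0 = 1 := by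
  simp [cesKernel, Real.Gamma_one, hα]

lemma ces_succ (α : ℝ) (hα : 0 < α) (n : ℕ) :
    cesKernel α (n + 1) = (α + n) / (n + 1) * cesKernel α n := by
  have h1 : (α + (n:ℝ)) ≠ 0 := by positivity
  have hΓα : Real.Gamma α ≠ 0 := (Real.Gamma_pos_of_pos hα).ne'
  have hΓn : Real.Gamma (n + 1) ≠ 0 := by
    have := Real.Gamma_pos_of_pos (by positivity : (0:ℝ) < n + 1); exact this.ne'
  have e1 : (α + ((n:ℝ) + 1)) = (α + n) + 1 := by ring
  have e2 : Real.Gamma (α + ((n:ℝ)+1)) = (α + n) * Real.Gamma (α + n) := by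
    rw [e1, Real.Gamma_add_one h1]
  have e3 : Real.Gamma (((n:ℝ)+1) + 1) = ((n:ℝ)+1) * Real.Gamma (n+1) := by
    rw [Real.Gamma_add_one (by positivity)]
  simp only [cesKernel]
  push_cast
  rw [e2, e3]
  field_simp

lemma ces_pos (α : ℝ) (hα : 0 < α) (n : ℕ) : 0 < cesKernel α n := by
  induction n with
  | zero => rw [ces_zero α (Real.Gamma_pos_of_pos hα).ne']; norm_num
  | succ n ih =>
      rw [ces_succ α hα n]
      have : (0:ℝ) < (α + n) / (n + 1) := by positivity
      exact mul_pos this ih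

lemma ces_ratio (α : ℝ) (hα : 0 < α) (n : ℕ) :
    cesKernel α n = α / (α + n) * cesKernel (α + 1) n := by
  have h1 : (α + (n:ℝ)) ≠ 0 := by positivity
  have hΓα : Real.Gamma α ≠ 0 := (Real.Gamma_pos_of_pos hα).ne'
  have hΓn : Real.Gamma ((n:ℝ) + 1) ≠ 0 :=
    (Real.Gamma_pos_of_pos (by positivity : (0:ℝ) < n + 1)).ne'
  have e1 : (α + 1 + (n:ℝ)) = (α + n) + 1 := by ring
  have e2 : Real.Gamma (α + 1 + (n:ℝ)) = (α + n) * Real.Gamma (α + n) := by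
    rw [e1, Real.Gamma_add_one h1]
  simp only [cesKernel]
  rw [e2, Real.Gamma_add_one hα.ne']
  field_simp

lemma ces_mono_le_one (α : ℝ) (hα0 : 0 < α) (hα1 : α ≤ 1) (n : ℕ) : cesKernel α n ≤ 1 := by
  induction n with
  | zero => rw [ces_zero α (Real.Gamma_pos_of_pos hα0).ne']
  | succ n ih =>
      rw [ces_succ α hα0 n]
      have h2 : (α + (n:ℝ)) / (n + 1) ≤ 1 := by
        rw [div_le_one (by positivity)]; linarith
      calc (α + (n:ℝ)) / (n+1) * cesKernel α n ≤ 1 * cesKernel α n :=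
            mul_le_mul_of_nonneg_right h2 (ces_pos α hα0 n).le
        _ ≤ 1 := by rw [one_mul]; exact ih

lemma ces_antitone (α : ℝ) (hα0 : 0 < α) (hα1 : α ≤ 1) (n : ℕ) :
    cesKernel α (n + 1) ≤ cesKernel α n := by
  rw [ces_succ α hα0 n]
  have h2 : (α + (n:ℝ)) / (n + 1) ≤ 1 := by
    rw [div_le_one (by positivity)]; linarith
  nlinarith [ces_pos α hα0 n]

lemma ces_diff (α : ℝ) (hα0 : 0 < α) (hα1 : α ≤ 1) (n : ℕ) :
    cesKernel α n - cesKernel α (n + 1) = (1 - α) / (α + n) * cesKernel α (n + 1) := by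
  have h1 : (α + (n:ℝ)) ≠ 0 := by positivity
  rw [ces_succ α hα0 n]
  field_simp
  ring

lemma cesK_pascal (α : ℝ) (hα : 0 < α) (n : ℕ) :
    cesKernel (α+1) (n+1) = cesKernel (α+1) n + cesKernel α (n+1) := by
  have h1 : cesKernel α (n+1) = α / (α + (n+1)) * cesKernel (α+1) (n+1) := by
    have := ces_ratio α hα (n+1); push_cast at this ⊢; linarith [this]
  have h2 : cesKernel (α+1) (n+1) = (α + 1 + n) / (n + 1) * cesKernel (α+1) n :=
    ces_succ (α+1) (by positivity) n
  have hn1 : ((n:ℝ) + 1) ≠ 0 := by positivity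
  have hαn : (α + ((n:ℝ)+1)) ≠ 0 := by positivity
  rw [h1, h2]
  field_simp
  ring

section
variable {X : Type*} [NormedAddCommGroup X] [NormedSpace ℂ X]
variable (α : ℝ) (T : X →L[ℂ] X) (C : ℝ)

lemma sum_bound (hα0 : 0 < α)
    (hTb : ∀ (n : ℕ) (x : X), (cesKernel (α + 1) n)⁻¹ *
      ∑ j ∈ Finset.range (n + 1), cesKernel α (n - j) * ‖(T ^ j) x‖ ≤ C * ‖x‖)
    (n : ℕ) (x : X) :
    ∑ j ∈ Finset.range (n + 1), cesKernel α (n - j) * ‖(T ^ j) x‖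
      ≤ C * cesKernel (α+1) n * ‖x‖ := by
  have hK := ces_pos (α+1) (by positivity) n
  have := hTb n x
  rw [inv_mul_le_iff₀ hK] at this
  calc _ ≤ cesKernel (α+1) n * (C * ‖x‖) := this
    _ = C * cesKernel (α+1) n * ‖x‖ := by ring

lemma main_est_s13 (hα0 : 0 < α) (hα1 : α ≤ 1) (hC : 0 < C)
    (hTb : ∀ (n : ℕ) (x : X), (cesKernel (α + 1) n)⁻¹ *
      ∑ j ∈ Finset.range (n + 1), cesKernel α (n - j) * ‖(T ^ j) x‖ ≤ C * ‖x‖)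
    (N n : ℕ) (hNn : N ≤ n) :
    ‖cesMean α T (n + 1) - cesMean α T n‖ ≤
      (1 - α) / (α + N) * C
        + (cesKernel (α+1) (n+1))⁻¹ * ∑ j ∈ Finset.Ico (n+1-N) (n+2), ‖T ^ j‖
        + C * (α / (α + (n+1))) := by
  have hKpos : ∀ m : ℕ, 0 < cesKernel (α+1) m := fun m => ces_pos (α+1) (by positivity) m
  have hkpos : ∀ m : ℕ, 0 < cesKernel α m := fun m => ces_pos α hα0 m
  set K : ℕ → ℝ := fun m => cesKernel (α+1) m with hKdef
  have hsumIco_nonneg : 0 ≤ ∑ j ∈ Finset.Ico (n+1-N) (n+2), ‖T ^ j‖ :=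
    Finset.sum_nonneg fun j _ => norm_nonneg _
  apply ContinuousLinearMap.opNorm_le_bound
  · have h1 : (0:ℝ) ≤ (1 - α) / (α + N) * C := by
      have : (0:ℝ) < α + N := by positivity
      have h1α : (0:ℝ) ≤ 1 - α := by linarith
      positivity
    have h2 : (0:ℝ) ≤ (K (n+1))⁻¹ * ∑ j ∈ Finset.Ico (n+1-N) (n+2), ‖T ^ j‖ := by
      have := hKpos (n+1); positivity
    have h3 : (0:ℝ) ≤ C * (α / (α + (n+1))) := by positivity
    linarith
  intro x
  -- apply the difference to x
  have happ : (cesMean α T (n + 1) - cesMean α T n) x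
      = (((K (n+1))⁻¹ : ℝ) : ℂ) • (∑ j ∈ Finset.range (n + 2),
            ((cesKernel α (n + 1 - j) : ℝ) : ℂ) • (T ^ j) x)
        - (((K n)⁻¹ : ℝ) : ℂ) • (∑ j ∈ Finset.range (n + 1),
            ((cesKernel α (n - j) : ℝ) : ℂ) • (T ^ j) x) := by
    simp [cesMean, ContinuousLinearMap.sub_apply, ContinuousLinearMap.smul_apply,
      ContinuousLinearMap.sum_apply]
    rfl
  set u : X := ∑ j ∈ Finset.range (n + 2),
      ((cesKernel α (n + 1 - j) : ℝ) : ℂ) • (T ^ j) x with hu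
  set v : X := ∑ j ∈ Finset.range (n + 1),
      ((cesKernel α (n - j) : ℝ) : ℂ) • (T ^ j) x with hv
  set a : ℝ := (K (n+1))⁻¹ with ha
  set b : ℝ := (K n)⁻¹ with hb
  have hdecomp : (cesMean α T (n + 1) - cesMean α T n) x
      = ((a:ℂ)) • (u - v) + (((a - b : ℝ)):ℂ) • v := by
    rw [happ, smul_sub, Complex.ofReal_sub, sub_smul]
    abel
  -- bound ‖v‖
  have hvle : ‖v‖ ≤ C * K n * ‖x‖ := by
    calc ‖v‖ ≤ ∑ j ∈ Finset.range (n + 1), ‖((cesKernel α (n - j) : ℝ) : ℂ) • (T ^ j) x‖ :=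
          norm_sum_le _ _
      _ = ∑ j ∈ Finset.range (n + 1), cesKernel α (n - j) * ‖(T ^ j) x‖ := by
          refine Finset.sum_congr rfl fun j _ => ?_
          rw [norm_smul, Complex.norm_real, Real.norm_eq_abs, abs_of_pos (hkpos _)]
      _ ≤ C * K n * ‖x‖ := sum_bound α T C hα0 hTb n x
  -- second summand
  have hKmono : K n ≤ K (n+1) := by
    have := cesK_pascal α hα0 n
    have := (hkpos (n+1)).le
    simp only [hKdef]; linarith
  have hab : a ≤ b := by
    exact inv_anti₀ (hKpos n) hKmono
  have hterm2 : ‖(((a - b : ℝ)):ℂ) • v‖ ≤ C * (α / (α + (n+1))) * ‖x‖ := by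
    rw [norm_smul, Complex.norm_real, Real.norm_eq_abs, abs_of_nonpos (by linarith)]
    have hdiffK : K (n+1) - K n = cesKernel α (n+1) := by
      have hp := cesK_pascal α hα0 n
      simp only [hKdef]; linarith
    have hba : b - a = cesKernel α (n+1) / (K n * K (n+1)) := by
      rw [← hdiffK, hb, ha]
      have h1 := (hKpos n).ne'
      have h2 := (hKpos (n+1)).ne'
      field_simp
      have h1' : K n ≠ 0 := h1
      have h2' : K (n+1) ≠ 0 := h2
      rw [div_sub_div _ _ h1' h2']
      ring
    have hk1 : cesKernel α (n+1) = α / (α + ((n:ℝ)+1)) * K (n+1) := by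
      have := ces_ratio α hα0 (n+1)
      push_cast at this ⊢
      simpa using this
    have hge : 0 ≤ b - a := by linarith
    calc (-(a-b)) * ‖v‖ = (b - a) * ‖v‖ := by ring_nf
      _ ≤ (b - a) * (C * K n * ‖x‖) := mul_le_mul_of_nonneg_left hvle hge
      _ = C * (α / (α + ((n:ℝ)+1))) * ‖x‖ := by
          rw [hba, hk1]
          have h1 := (hKpos n).ne'
          have h2 := (hKpos (n+1)).ne'
          field_simp
          ring
          have h1' : K n ≠ 0 := h1
          have h3 : K (1+n) ≠ 0 := by rw [add_comm]; exact h2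
          field_simp
  -- first summand: u - v
  have hk0 : cesKernel α 0 = 1 := ces_zero α (Real.Gamma_pos_of_pos hα0).ne'
  have huv : u - v = (∑ j ∈ Finset.range (n + 1),
        (((cesKernel α (n - j + 1) - cesKernel α (n - j) : ℝ)):ℂ) • (T ^ j) x)
      + (T ^ (n+1)) x := by
    rw [hu, hv, Finset.sum_range_succ]
    have he : n + 1 - (n+1) = 0 := by omega
    rw [he, hk0]
    have hcong : ∑ j ∈ Finset.range (n + 1), ((cesKernel α (n + 1 - j) : ℝ) : ℂ) • (T ^ j) x
        = ∑ j ∈ Finset.range (n + 1), ((cesKernel α (n - j + 1) : ℝ) : ℂ) • (T ^ j) x := by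
      refine Finset.sum_congr rfl fun j hj => ?_
      have : n + 1 - j = n - j + 1 := by
        have := Finset.mem_range.mp hj; omega
      rw [this]
    rw [hcong]
    simp only [Complex.ofReal_sub, sub_smul, Finset.sum_sub_distrib, Complex.ofReal_one, one_smul]
    abel
  have huvle : ‖u - v‖ ≤ (∑ j ∈ Finset.range (n + 1),
        (cesKernel α (n - j) - cesKernel α (n - j + 1)) * ‖(T ^ j) x‖) + ‖(T ^ (n+1)) x‖ := by
    rw [huv]
    refine le_trans (norm_add_le _ _) (add_le_add_left ?_ _)
    refine le_trans (norm_sum_le _ _) ?_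
    refine Finset.sum_le_sum fun j _ => ?_
    rw [norm_smul, Complex.norm_real, Real.norm_eq_abs]
    have : |cesKernel α (n - j + 1) - cesKernel α (n - j)|
        = cesKernel α (n - j) - cesKernel α (n - j + 1) := by
      rw [abs_of_nonpos (by linarith [ces_antitone α hα0 hα1 (n - j)])]; ring
    rw [this]
  -- tail bound
  have hNν : (0:ℝ) < α + N := by positivity
  have h1α : (0:ℝ) ≤ 1 - α := by linarith
  have htail : ∑ j ∈ Finset.Ico 0 (n+1-N),
      (cesKernel α (n - j) - cesKernel α (n - j + 1)) * ‖(T ^ j) x‖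
      ≤ (1-α)/(α+(N:ℝ)) * (C * K (n+1) * ‖x‖) := by
    have step1 : ∀ j ∈ Finset.Ico 0 (n+1-N),
        (cesKernel α (n - j) - cesKernel α (n - j + 1)) * ‖(T ^ j) x‖
        ≤ (1-α)/(α+(N:ℝ)) * (cesKernel α (n + 1 - j) * ‖(T ^ j) x‖) := by
      intro j hj
      have hjlt : j < n+1-N := (Finset.mem_Ico.mp hj).2
      have hNnj : N ≤ n - j := by omega
      have he : n + 1 - j = n - j + 1 := by omega
      have hcast : (N:ℝ) ≤ ((n-j:ℕ):ℝ) := Nat.cast_le.mpr hNnj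
      have hcoef : (1-α)/(α+((n-j:ℕ):ℝ)) ≤ (1-α)/(α+(N:ℝ)) :=
        div_le_div_of_nonneg_left h1α hNν (by linarith)
      calc (cesKernel α (n - j) - cesKernel α (n - j + 1)) * ‖(T ^ j) x‖
          = (1-α)/(α+((n-j:ℕ):ℝ)) * (cesKernel α (n-j+1) * ‖(T ^ j) x‖) := by
            rw [ces_diff α hα0 hα1 (n-j)]; ring
        _ ≤ (1-α)/(α+(N:ℝ)) * (cesKernel α (n-j+1) * ‖(T ^ j) x‖) := by
            apply mul_le_mul_of_nonneg_right hcoef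
            exact mul_nonneg (hkpos _).le (norm_nonneg _)
        _ = (1-α)/(α+(N:ℝ)) * (cesKernel α (n+1-j) * ‖(T ^ j) x‖) := by rw [he]
    calc ∑ j ∈ Finset.Ico 0 (n+1-N),
          (cesKernel α (n - j) - cesKernel α (n - j + 1)) * ‖(T ^ j) x‖
        ≤ ∑ j ∈ Finset.Ico 0 (n+1-N),
            (1-α)/(α+(N:ℝ)) * (cesKernel α (n+1-j) * ‖(T ^ j) x‖) :=
          Finset.sum_le_sum step1
      _ = (1-α)/(α+(N:ℝ)) * ∑ j ∈ Finset.Ico 0 (n+1-N), cesKernel α (n+1-j) * ‖(T ^ j) x‖ := by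
          rw [Finset.mul_sum]
      _ ≤ (1-α)/(α+(N:ℝ)) * (C * K (n+1) * ‖x‖) := by
          apply mul_le_mul_of_nonneg_left _ (by positivity)
          calc ∑ j ∈ Finset.Ico 0 (n+1-N), cesKernel α (n+1-j) * ‖(T ^ j) x‖
              ≤ ∑ j ∈ Finset.range (n+2), cesKernel α (n+1-j) * ‖(T ^ j) x‖ := by
                rw [Finset.range_eq_Ico]
                apply Finset.sum_le_sum_of_subset_of_nonneg
                  (Finset.Ico_subset_Ico_right (by omega))
                intro i _ _
                exact mul_nonneg (hkpos _).le (norm_nonneg _)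
            _ ≤ C * K (n+1) * ‖x‖ := sum_bound α T C hα0 hTb (n+1) x
  -- head bound
  have hhead : (∑ j ∈ Finset.Ico (n+1-N) (n+1),
        (cesKernel α (n - j) - cesKernel α (n - j + 1)) * ‖(T ^ j) x‖) + ‖(T ^ (n+1)) x‖
      ≤ (∑ j ∈ Finset.Ico (n+1-N) (n+2), ‖T ^ j‖) * ‖x‖ := by
    have h1 : ∀ j ∈ Finset.Ico (n+1-N) (n+1),
        (cesKernel α (n - j) - cesKernel α (n - j + 1)) * ‖(T ^ j) x‖ ≤ ‖T ^ j‖ * ‖x‖ := by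
      intro j _
      have hD1 : cesKernel α (n - j) - cesKernel α (n - j + 1) ≤ 1 := by
        have := hkpos (n-j+1)
        have := ces_mono_le_one α hα0 hα1 (n-j)
        linarith
      calc (cesKernel α (n - j) - cesKernel α (n - j + 1)) * ‖(T ^ j) x‖
          ≤ 1 * ‖(T ^ j) x‖ := mul_le_mul_of_nonneg_right hD1 (norm_nonneg _)
        _ = ‖(T ^ j) x‖ := one_mul _
        _ ≤ ‖T ^ j‖ * ‖x‖ := ContinuousLinearMap.le_opNorm _ _
    have h2 : ∑ j ∈ Finset.Ico (n+1-N) (n+2), ‖T ^ j‖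
        = (∑ j ∈ Finset.Ico (n+1-N) (n+1), ‖T ^ j‖) + ‖T ^ (n+1)‖ :=
      Finset.sum_Ico_succ_top (by omega) _
    calc (∑ j ∈ Finset.Ico (n+1-N) (n+1),
          (cesKernel α (n - j) - cesKernel α (n - j + 1)) * ‖(T ^ j) x‖) + ‖(T ^ (n+1)) x‖
        ≤ (∑ j ∈ Finset.Ico (n+1-N) (n+1), ‖T ^ j‖ * ‖x‖) + ‖T ^ (n+1)‖ * ‖x‖ :=
          add_le_add (Finset.sum_le_sum h1) (ContinuousLinearMap.le_opNorm _ _)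
      _ = ((∑ j ∈ Finset.Ico (n+1-N) (n+1), ‖T ^ j‖) + ‖T ^ (n+1)‖) * ‖x‖ := by
          rw [add_mul, Finset.sum_mul]
      _ = (∑ j ∈ Finset.Ico (n+1-N) (n+2), ‖T ^ j‖) * ‖x‖ := by rw [h2]
  -- combine
  have haK : a * K (n+1) = 1 := inv_mul_cancel₀ (hKpos (n+1)).ne'
  have hapos : 0 < a := inv_pos.mpr (hKpos (n+1))
  have hsplitle : ‖u - v‖ ≤ (1-α)/(α+(N:ℝ)) * (C * K (n+1) * ‖x‖)
      + (∑ j ∈ Finset.Ico (n+1-N) (n+2), ‖T ^ j‖) * ‖x‖ := by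
    have hsp : ∑ j ∈ Finset.range (n + 1),
        (cesKernel α (n - j) - cesKernel α (n - j + 1)) * ‖(T ^ j) x‖
        = (∑ j ∈ Finset.Ico 0 (n+1-N),
            (cesKernel α (n - j) - cesKernel α (n - j + 1)) * ‖(T ^ j) x‖)
          + ∑ j ∈ Finset.Ico (n+1-N) (n+1),
            (cesKernel α (n - j) - cesKernel α (n - j + 1)) * ‖(T ^ j) x‖ := by
      rw [Finset.range_eq_Ico,
        ← Finset.sum_Ico_consecutive _ (Nat.zero_le _) (by omega : n+1-N ≤ n+1)]
    calc ‖u - v‖ ≤ _ := huvle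
      _ = (∑ j ∈ Finset.Ico 0 (n+1-N),
            (cesKernel α (n - j) - cesKernel α (n - j + 1)) * ‖(T ^ j) x‖)
          + ((∑ j ∈ Finset.Ico (n+1-N) (n+1),
            (cesKernel α (n - j) - cesKernel α (n - j + 1)) * ‖(T ^ j) x‖) + ‖(T ^ (n+1)) x‖) := by
          rw [hsp, add_assoc]
      _ ≤ _ := add_le_add htail hhead
  calc ‖(cesMean α T (n + 1) - cesMean α T n) x‖
      = ‖(a:ℂ) • (u - v) + (((a - b : ℝ)):ℂ) • v‖ := by rw [hdecomp]
    _ ≤ ‖(a:ℂ) • (u - v)‖ + ‖(((a - b : ℝ)):ℂ) • v‖ := norm_add_le _ _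
    _ = a * ‖u - v‖ + ‖(((a - b : ℝ)):ℂ) • v‖ := by
        rw [norm_smul, Complex.norm_real, Real.norm_eq_abs, abs_of_pos hapos]
    _ ≤ a * ((1-α)/(α+(N:ℝ)) * (C * K (n+1) * ‖x‖)
          + (∑ j ∈ Finset.Ico (n+1-N) (n+2), ‖T ^ j‖) * ‖x‖)
        + C * (α / (α + ((n:ℝ)+1))) * ‖x‖ :=
        add_le_add (mul_le_mul_of_nonneg_left hsplitle hapos.le) hterm2
    _ = ((1-α)/(α+(N:ℝ)) * C * (a * K (n+1))
          + a * (∑ j ∈ Finset.Ico (n+1-N) (n+2), ‖T ^ j‖)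
          + C * (α / (α + ((n:ℝ)+1)))) * ‖x‖ := by ring
    _ = ((1 - α) / (α + N) * C
          + (cesKernel (α+1) (n+1))⁻¹ * ∑ j ∈ Finset.Ico (n+1-N) (n+2), ‖T ^ j‖
          + C * (α / (α + ((n:ℝ)+1)))) * ‖x‖ := by rw [haK, mul_one]
    _ = _ := by push_cast; ring
lemma pow_norm_le (hα0 : 0 < α) (hC : 0 < C)
    (hTb : ∀ (n : ℕ) (x : X), (cesKernel (α + 1) n)⁻¹ *
      ∑ j ∈ Finset.range (n + 1), cesKernel α (n - j) * ‖(T ^ j) x‖ ≤ C * ‖x‖)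
    (p : ℕ) : ‖T ^ p‖ ≤ C * cesKernel (α+1) p := by
  have hK := ces_pos (α+1) (by positivity : 0 < α+1) p
  apply ContinuousLinearMap.opNorm_le_bound _ (by positivity)
  intro x
  have h1 : cesKernel α (p - p) * ‖(T ^ p) x‖
      ≤ ∑ j ∈ Finset.range (p + 1), cesKernel α (p - j) * ‖(T ^ j) x‖ := by
    apply Finset.single_le_sum (f := fun j => cesKernel α (p - j) * ‖(T ^ j) x‖)
    · intro i _; have := ces_pos α hα0 (p - i); positivity
    · exact Finset.self_mem_range_succ p
  simp only [Nat.sub_self] at h1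
  rw [ces_zero α (Real.Gamma_pos_of_pos hα0).ne', one_mul] at h1
  calc ‖(T ^ p) x‖ ≤ _ := h1
    _ ≤ C * cesKernel (α+1) p * ‖x‖ := sum_bound α T C hα0 hTb p x

lemma growth (hα0 : 0 < α) (hC : 0 < C)
    (hTb : ∀ (n : ℕ) (x : X), (cesKernel (α + 1) n)⁻¹ *
      ∑ j ∈ Finset.range (n + 1), cesKernel α (n - j) * ‖(T ^ j) x‖ ≤ C * ‖x‖)
    (n : ℕ) :
    ‖T ^ n‖ * ∑ m ∈ Finset.range (n + 1), α / (α + m) ≤ C^2 * cesKernel (α+1) n := by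
  set H := ∑ m ∈ Finset.range (n + 1), α / (α + (m:ℝ)) with hH
  have hHpos : 0 < H := by
    apply Finset.sum_pos
    · intro m _; have : (0:ℝ) < α + m := by positivity
      positivity
    · exact Finset.nonempty_range_add_one
  have key : ∀ x : X, ‖(T ^ n) x‖ * H ≤ C^2 * cesKernel (α+1) n * ‖x‖ := by
    intro x
    have step : ∀ j ∈ Finset.range (n+1),
        α / (α + ((n - j : ℕ):ℝ)) * ‖(T ^ n) x‖
          ≤ C * (cesKernel α (n - j) * ‖(T ^ j) x‖) := by
      intro j hj
      have hjn : j ≤ n := Nat.lt_succ_iff.mp (Finset.mem_range.mp hj)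
      have hTn : ‖(T ^ n) x‖ ≤ C * cesKernel (α+1) (n - j) * ‖(T ^ j) x‖ := by
        have hcomp : (T ^ n) x = (T ^ (n - j)) ((T ^ j) x) := by
          rw [← ContinuousLinearMap.comp_apply, ← ContinuousLinearMap.mul_def, ← pow_add,
            Nat.sub_add_cancel hjn]
        rw [hcomp]
        calc ‖(T ^ (n-j)) ((T ^ j) x)‖ ≤ ‖T ^ (n-j)‖ * ‖(T ^ j) x‖ :=
              ContinuousLinearMap.le_opNorm _ _
          _ ≤ C * cesKernel (α+1) (n-j) * ‖(T ^ j) x‖ := by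
              apply mul_le_mul_of_nonneg_right (pow_norm_le α T C hα0 hC hTb (n-j)) (norm_nonneg _)
      have hr : cesKernel α (n - j) = α / (α + ((n-j:ℕ):ℝ)) * cesKernel (α+1) (n-j) :=
        ces_ratio α hα0 (n-j)
      have hq : (0:ℝ) < α / (α + ((n-j:ℕ):ℝ)) := by positivity
      calc α / (α + ((n-j:ℕ):ℝ)) * ‖(T ^ n) x‖
          ≤ α / (α + ((n-j:ℕ):ℝ)) * (C * cesKernel (α+1) (n - j) * ‖(T ^ j) x‖) :=
            mul_le_mul_of_nonneg_left hTn hq.le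
        _ = C * (cesKernel α (n - j) * ‖(T ^ j) x‖) := by rw [hr]; ring
    have hsum := Finset.sum_le_sum step
    have hre : ∑ j ∈ Finset.range (n+1), α / (α + ((n - j : ℕ):ℝ)) * ‖(T ^ n) x‖
        = ‖(T ^ n) x‖ * H := by
      rw [← Finset.sum_mul, mul_comm, hH]
      congr 1
      rw [← Finset.sum_range_reflect (fun m => α / (α + (m:ℝ))) (n+1)]
      refine Finset.sum_congr rfl fun i hi => ?_
      have : n + 1 - 1 - i = n - i := by omega
      simp only [this]
    rw [hre] at hsum
    calc ‖(T ^ n) x‖ * H ≤ ∑ i ∈ Finset.range (n + 1), C * (cesKernel α (n - i) * ‖(T ^ i) x‖) := hsum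
      _ = C * ∑ j ∈ Finset.range (n + 1), cesKernel α (n - j) * ‖(T ^ j) x‖ := by
          rw [Finset.mul_sum]
      _ ≤ C * (C * cesKernel (α+1) n * ‖x‖) :=
          mul_le_mul_of_nonneg_left (sum_bound α T C hα0 hTb n x) hC.le
      _ = C^2 * cesKernel (α+1) n * ‖x‖ := by ring
  have hop : ‖T ^ n‖ ≤ C^2 * cesKernel (α+1) n / H := by
    apply ContinuousLinearMap.opNorm_le_bound
    · have hK := ces_pos (α+1) (by positivity : 0 < α+1) n
      positivity
    · intro x
      rw [div_mul_eq_mul_div, le_div_iff₀ hHpos]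
      calc ‖(T ^ n) x‖ * H ≤ C^2 * cesKernel (α+1) n * ‖x‖ := key x
        _ = C ^ 2 * cesKernel (α + 1) n * ‖x‖ := rfl
  calc ‖T ^ n‖ * H ≤ (C^2 * cesKernel (α+1) n / H) * H :=
        mul_le_mul_of_nonneg_right hop hHpos.le
    _ = C^2 * cesKernel (α+1) n := by field_simp

lemma harmonic_div (hα0 : 0 < α) (hα1 : α ≤ 1) :
    Tendsto (fun n : ℕ => ∑ m ∈ Finset.range (n + 1), α / (α + (m:ℝ))) atTop atTop := by
  have h1 : Tendsto (fun n : ℕ => ∑ i ∈ Finset.range (n+1), (1:ℝ) / (i + 1)) atTop atTop :=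
    (Real.tendsto_sum_range_one_div_nat_succ_atTop).comp (tendsto_add_atTop_nat 1)
  have h2 : Tendsto (fun n : ℕ => α * ∑ i ∈ Finset.range (n+1), (1:ℝ) / (i + 1)) atTop atTop :=
    Tendsto.const_mul_atTop hα0 h1
  apply tendsto_atTop_mono _ h2
  intro n
  rw [Finset.mul_sum]
  apply Finset.sum_le_sum
  intro m _
  rw [mul_one_div]
  apply div_le_div_of_nonneg_left hα0.le (by positivity) (by push_cast; linarith)

lemma pow_div_tendsto (hα0 : 0 < α) (hα1 : α ≤ 1) (hC : 0 < C)
    (hTb : ∀ (n : ℕ) (x : X), (cesKernel (α + 1) n)⁻¹ *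
      ∑ j ∈ Finset.range (n + 1), cesKernel α (n - j) * ‖(T ^ j) x‖ ≤ C * ‖x‖) :
    Tendsto (fun n : ℕ => ‖T ^ n‖ / cesKernel (α+1) n) atTop (nhds 0) := by
  have hH : ∀ n : ℕ, 0 < ∑ m ∈ Finset.range (n + 1), α / (α + (m:ℝ)) := by
    intro n
    apply Finset.sum_pos (fun m _ => by positivity) Finset.nonempty_range_add_one
  apply squeeze_zero (g := fun n : ℕ => C^2 / ∑ m ∈ Finset.range (n + 1), α / (α + (m:ℝ)))
  · intro n
    have hK := ces_pos (α+1) (by positivity : 0 < α+1) n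
    positivity
  · intro n
    have hK := ces_pos (α+1) (by positivity : 0 < α+1) n
    rw [div_le_div_iff₀ hK (hH n)]
    calc ‖T ^ n‖ * ∑ m ∈ Finset.range (n + 1), α / (α + (m:ℝ))
        ≤ C^2 * cesKernel (α+1) n := growth α T C hα0 hC hTb n
      _ = C^2 * cesKernel (α+1) n := rfl
  · exact Tendsto.div_atTop tendsto_const_nhds (harmonic_div α hα0 hα1)

end

/-- Let `0 < α ≤ 1` and `T` absolutely `(C,α)`-Cesàro bounded on a complex Banach space.
Then `‖M_T^α(n+1) - M_T^α(n)‖ → 0`. -/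
theorem stmt13 {X : Type*} [NormedAddCommGroup X] [NormedSpace ℂ X] [CompleteSpace X]
    (α : ℝ) (hα0 : 0 < α) (hα1 : α ≤ 1) (T : X →L[ℂ] X) (hT : AbsCesaroBounded α T) :
    Tendsto (fun n : ℕ => ‖cesMean α T (n + 1) - cesMean α T n‖) atTop (nhds 0) := by
  obtain ⟨C, hC, hTb⟩ := hT
  have hKpos : ∀ m : ℕ, 0 < cesKernel (α+1) m := fun m => ces_pos (α+1) (by positivity) m
  have hKmono : Monotone (fun m : ℕ => cesKernel (α+1) m) := by
    apply monotone_nat_of_le_succ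
    intro m
    have := cesK_pascal α hα0 m
    have := (ces_pos α hα0 (m+1)).le
    linarith
  have hF : Tendsto (fun n : ℕ => ‖T ^ n‖ / cesKernel (α+1) n) atTop (nhds 0) :=
    pow_div_tendsto α T C hα0 hα1 hC hTb
  rw [Metric.tendsto_nhds]
  intro ε hε
  have hε3 : 0 < ε / 3 := by linarith
  -- choose N
  have hNlim : Tendsto (fun N : ℕ => (1 - α) / (α + (N:ℝ)) * C) atTop (nhds 0) := by
    have h1 : Tendsto (fun N : ℕ => (α + (N:ℝ))) atTop atTop :=
      tendsto_atTop_add_const_left _ α tendsto_natCast_atTop_atTop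
    have h2 := Tendsto.div_atTop (tendsto_const_nhds (x := (1-α)) (f := atTop)) h1
    simpa using h2.mul_const C
  obtain ⟨N, hN⟩ := (hNlim.eventually (gt_mem_nhds hε3)).exists
  -- window term
  have hsub : ∀ i : ℕ, Tendsto (fun n : ℕ => n + 1 - N + i) atTop atTop :=
    fun i => tendsto_atTop_atTop.mpr fun b => ⟨b + N, fun a ha => by omega⟩
  have hwin : Tendsto (fun n : ℕ => ∑ i ∈ Finset.range (N+1),
      ‖T ^ (n + 1 - N + i)‖ / cesKernel (α+1) (n + 1 - N + i)) atTop (nhds 0) := by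
    have := tendsto_finset_sum (Finset.range (N+1))
      (fun i _ => hF.comp (hsub i))
    simpa using this
  have hG : ∀ᶠ n : ℕ in atTop,
      (cesKernel (α+1) (n+1))⁻¹ * ∑ j ∈ Finset.Ico (n+1-N) (n+2), ‖T ^ j‖ < ε/3 := by
    have hGle : ∀ n : ℕ, N ≤ n →
        (cesKernel (α+1) (n+1))⁻¹ * ∑ j ∈ Finset.Ico (n+1-N) (n+2), ‖T ^ j‖
          ≤ ∑ i ∈ Finset.range (N+1),
              ‖T ^ (n + 1 - N + i)‖ / cesKernel (α+1) (n + 1 - N + i) := by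
      intro n hn
      rw [Finset.mul_sum]
      have hre : ∑ j ∈ Finset.Ico (n+1-N) (n+2),
          (cesKernel (α+1) (n+1))⁻¹ * ‖T ^ j‖
          = ∑ i ∈ Finset.range (N+1),
              (cesKernel (α+1) (n+1))⁻¹ * ‖T ^ (n + 1 - N + i)‖ := by
        rw [Finset.sum_Ico_eq_sum_range]
        have : n + 2 - (n + 1 - N) = N + 1 := by omega
        rw [this]
      rw [hre]
      apply Finset.sum_le_sum
      intro i hi
      have hile : i ≤ N := Nat.lt_succ_iff.mp (Finset.mem_range.mp hi)
      have hj : n + 1 - N + i ≤ n + 1 := by omega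
      have hKle := hKmono hj
      have h1 := hKpos (n + 1 - N + i)
      have h2 := hKpos (n+1)
      rw [div_eq_inv_mul]
      apply mul_le_mul_of_nonneg_right _ (norm_nonneg _)
      exact inv_anti₀ h1 hKle
    filter_upwards [eventually_ge_atTop N,
      hwin.eventually (gt_mem_nhds hε3)] with n h1 h2
    exact lt_of_le_of_lt (hGle n h1) h2
  have h3 : ∀ᶠ n : ℕ in atTop, C * (α / (α + ((n:ℝ)+1))) < ε/3 := by
    have h1 : Tendsto (fun n : ℕ => (α + ((n:ℝ)+1))) atTop atTop := by
      apply tendsto_atTop_add_const_left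
      exact tendsto_atTop_add_const_right _ _ tendsto_natCast_atTop_atTop
    have h2 := Tendsto.div_atTop (tendsto_const_nhds (x := α) (f := atTop)) h1
    have h4 : Tendsto (fun n : ℕ => C * (α / (α + ((n:ℝ)+1)))) atTop (nhds 0) := by
      simpa using h2.const_mul C
    exact h4.eventually (gt_mem_nhds hε3)
  filter_upwards [eventually_ge_atTop N, hG, h3] with n h1 h2 h4
  have hest := main_est_s13 α T C hα0 hα1 hC hTb N n h1
  rw [Real.dist_eq, sub_zero, abs_of_nonneg (norm_nonneg _)]
  calc ‖cesMean α T (n + 1) - cesMean α T n‖ ≤ _ := hest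
    _ < ε/3 + ε/3 + ε/3 := by
        apply add_lt_add (add_lt_add hN h2) h4
    _ = ε := by ring
end
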